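/- arXiv:1205.4885 — 5 statements merged into one kernel-verified Lean document; each statement's English description precedes it below -/
import Mathlib

section
/- Let α and β be columns over A with α ⋡ β. Then the tableau P(αβ) contains at most two columns. -/
/-! Common definitions: Plactic monoid, columns, rows, tableaux, the
rewriting system `(C,T)`. -/

/-- Words over the ordered alphabet `A = {1 < 2 < ⋯ < n}`, modelled as `Fin n`. -/
abbrev Word (n : ℕ) := List (Fin n)

/-- A single application, in context, of one of the Knuth defining relations
`(xzy, zxy)` for `x ≤ y < z` and `(yxz, yzx)` for `x < y ≤ z`. -/
inductive KnuthStep (n : ℕ) : Word n → Word n → Prop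
  | left (u v : Word n) (x y z : Fin n) (h1 : x ≤ y) (h2 : y < z) :
      KnuthStep n (u ++ [x, z, y] ++ v) (u ++ [z, x, y] ++ v)
  | right (u v : Word n) (x y z : Fin n) (h1 : x < y) (h2 : y ≤ z) :
      KnuthStep n (u ++ [y, x, z] ++ v) (u ++ [y, z, x] ++ v)

/-- `u =_{M_n} v`: the words `u`, `v` represent the same element of the Plactic
monoid `M_n`, i.e. they are equivalent under the congruence generated by the
Knuth relations. -/
def PlacticEq (n : ℕ) : Word n → Word n → Prop := Relation.EqvGen (KnuthStep n)

/-- A column: a nonempty strictly decreasing word. -/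
def IsColumn {n : ℕ} (w : Word n) : Prop := w ≠ [] ∧ w.Chain' (fun a b => b < a)

/-- A row: a nondecreasing word. -/
def IsRow {n : ℕ} (w : Word n) : Prop := w.Chain' (fun a b => a ≤ b)

/-- The row `α` dominates the row `β`: `|α| ≤ |β|` and `α_i > β_i` for all
`i ≤ |α|`. -/
def Dominates {n : ℕ} (α β : Word n) : Prop :=
  α.length ≤ β.length ∧
    ∀ i (hα : i < α.length) (hβ : i < β.length), β[i]'hβ < α[i]'hα

/-- `rs` is the list of rows, from top to bottom, of (the planar representation
of) a tableau: each row is a nonempty row, and each row dominates the next. -/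
def IsTableauRows {n : ℕ} (rs : List (Word n)) : Prop :=
  (∀ r ∈ rs, r ≠ [] ∧ IsRow r) ∧ rs.Chain' Dominates

/-- `w` is a tableau: it is the product, from top to bottom, of the rows of a
planar tableau (this decomposition is automatically the decomposition of `w`
into rows of maximal length). -/
def IsTableau {n : ℕ} (w : Word n) : Prop :=
  ∃ rs : List (Word n), IsTableauRows rs ∧ w = rs.flatten

/-- The order `⪰` on columns: for `α = α_k⋯α_1` and `β = β_l⋯β_1` (so that the
letters of a column are indexed from the bottom, i.e. from the right-hand end
of the word), `α ⪰ β` iff `k ≥ l` and `α_i ≤ β_i` for all `i ≤ l`; that is,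
`α` may appear immediately to the left of `β` in a tableau. -/
def ColGE {n : ℕ} (α β : Word n) : Prop :=
  β.length ≤ α.length ∧
    ∀ (i : ℕ) (a b : Fin n), α.reverse[i]? = some a → β.reverse[i]? = some b → a ≤ b

/-- The finite alphabet `C = {c_α : α a column}`. -/
abbrev CLetter (n : ℕ) := {w : Word n // IsColumn w}

/-- Words over the alphabet `C`. -/
abbrev CWord (n : ℕ) := List (CLetter n)

/-- The image of a word over `C` under `c_α ↦ α`. -/
def evalC {n : ℕ} (u : CWord n) : Word n := (u.map Subtype.val).flatten

/-- `SingleColP u w`: the tableau `P(u)` consists of a single column, namely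
`w`.  (Since tableaux form a cross-section of `M_n`, and a word which is a
single column is itself a tableau, this holds precisely when `w` is a column
representing the same element of `M_n` as `u`.) -/
def SingleColP (n : ℕ) (u w : Word n) : Prop := IsColumn w ∧ PlacticEq n u w

/-- `TwoColP u w₁ w₂`: the tableau `P(u)` consists of exactly two columns, with
left column `w₁` and right column `w₂`.  (Since tableaux form a cross-section
of `M_n`, and the words `w₁ w₂` with `w₁ ⪰ w₂` columns are exactly the column
readings of two-column tableaux, this holds precisely when `w₁, w₂` are columns
with `w₁ ⪰ w₂` whose concatenation represents the same element of `M_n` as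
`u`.) -/
def TwoColP (n : ℕ) (u w₁ w₂ : Word n) : Prop :=
  IsColumn w₁ ∧ IsColumn w₂ ∧ ColGE w₁ w₂ ∧ PlacticEq n u (w₁ ++ w₂)

/-- The rules of the rewriting system `T` on `C*`: for columns `α ⋡ β`,
`c_α c_β → c_γ` if `P(αβ)` is the single column `γ`, and `c_α c_β → c_γ c_δ`
if `P(αβ)` has exactly two columns `γ` (left) and `δ` (right). -/
inductive TRule (n : ℕ) : CWord n → CWord n → Prop
  | one (α β γ : CLetter n) (h : ¬ ColGE α.1 β.1)
      (hP : SingleColP n (α.1 ++ β.1) γ.1) :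
      TRule n [α, β] [γ]
  | two (α β γ δ : CLetter n) (h : ¬ ColGE α.1 β.1)
      (hP : TwoColP n (α.1 ++ β.1) γ.1 δ.1) :
      TRule n [α, β] [γ, δ]

/-- One step of rewriting using a rule of `T`, in context. -/
def TStep (n : ℕ) (u v : CWord n) : Prop :=
  ∃ p q l r, TRule n l r ∧ u = p ++ l ++ q ∧ v = p ++ r ++ q

/-! The bottom row of a tableau is its longest row, and it is a nondecreasing subword of the
tableau's reading. Schensted's invariant: a Knuth relation does not change which lengths of
nondecreasing subwords occur in a word, since a nondecreasing subword meeting the rewritten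
factor `xzy` (resp. `yxz`) in `xz` can use `xy` (resp. `yz`) instead, and every other
nondecreasing subword of the factor survives the rewriting. Finally, a nondecreasing subword
of a product of two columns takes at most one letter from each column. -/

section NondecreasingSublist

variable {σ : Type*}

theorem sublist_triple_iff {a b c : σ} {t : List σ} :
    t.Sublist [a, b, c] ↔ t = [] ∨ t = [a] ∨ t = [b] ∨ t = [a, b] ∨ t = [c] ∨ t = [a, c] ∨
      t = [b, c] ∨ t = [a, b, c] := by
  simp [← List.mem_sublists, List.sublists]

variable [Preorder σ]

def HasNondecSublist (w : List σ) (k : ℕ) : Prop :=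
  ∃ s : List σ, s.Sublist w ∧ s.IsChain (· ≤ ·) ∧ s.length = k

/-- `s` and `r` play the parts, outside the factor `m`, of a nondecreasing subword of
`u ++ m ++ v`. -/
def NondecReplaceable (m m' : List σ) : Prop :=
  ∀ s t r : List σ, t.Sublist m → (s ++ t ++ r).IsChain (· ≤ ·) →
    ∃ t', t'.Sublist m' ∧ t'.length = t.length ∧ (s ++ t' ++ r).IsChain (· ≤ ·)

theorem HasNondecSublist.of_nondecReplaceable {m m' : List σ} (h : NondecReplaceable m m')
    (u v : List σ) {k : ℕ} (hk : HasNondecSublist (u ++ m ++ v) k) :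
    HasNondecSublist (u ++ m' ++ v) k := by
  obtain ⟨w, hw, hchain, rfl⟩ := hk
  obtain ⟨s', r, rfl, hs', hr⟩ := List.sublist_append_iff.1 hw
  obtain ⟨s, t, rfl, hs, ht⟩ := List.sublist_append_iff.1 hs'
  obtain ⟨t', ht', hlen, hchain'⟩ := h s t r ht hchain
  exact ⟨s ++ t' ++ r, (hs.append ht').append hr, hchain', by simp [hlen]⟩

theorem nondecReplaceable_of_forall_sublist {m m' : List σ}
    (h : ∀ t : List σ, t.Sublist m → t.IsChain (· ≤ ·) → t.Sublist m') :
    NondecReplaceable m m' := fun _ t _ ht hc =>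
  ⟨t, h t ht hc.left_of_append.right_of_append, rfl, hc⟩

theorem isChain_append_pair_append {s r : List σ} {a b a' b' : σ}
    (h : (s ++ [a, b] ++ r).IsChain (· ≤ ·)) (ha : a ≤ a') (hab : a' ≤ b') (hb : b' ≤ b) :
    (s ++ [a', b'] ++ r).IsChain (· ≤ ·) := by
  simp only [List.append_assoc, List.cons_append, List.nil_append, List.isChain_append,
    List.isChain_cons, List.head?_cons, Option.mem_def, Option.some.injEq, forall_eq'] at h ⊢
  obtain ⟨hs, ⟨-, hbr, hr⟩, hsa⟩ := h
  exact ⟨hs, ⟨hab, fun y hy => hb.trans (hbr y hy), hr⟩, fun x hx => (hsa x hx).trans ha⟩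

theorem HasNondecSublist.le_one {w : List σ} (hw : w.IsChain (fun a b => b < a)) {k : ℕ}
    (hk : HasNondecSublist w k) : k ≤ 1 := by
  obtain ⟨_ | ⟨_, _ | ⟨_, _⟩⟩, hs, hle, rfl⟩ := hk
  · simp
  · simp
  · exact absurd hle.rel (not_le_of_gt (hw.sublist hs).rel)

section KnuthTriples

variable {x y z : σ}

theorem nondecReplaceable_xzy_zxy (hxy : x ≤ y) (hyz : y < z) :
    NondecReplaceable [x, z, y] [z, x, y] := by
  intro s t r ht hc
  by_cases htxz : t = [x, z]
  · subst htxz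
    exact ⟨[x, y], by simp, rfl, isChain_append_pair_append hc le_rfl hxy hyz.le⟩
  refine ⟨t, ?_, rfl, hc⟩
  have htc := hc.left_of_append.right_of_append
  rw [sublist_triple_iff] at ht
  have hxz : x < z := by order
  rcases ht with rfl | rfl | rfl | rfl | rfl | rfl | rfl | rfl <;> simp_all [not_le_of_gt]

theorem nondecReplaceable_zxy_xzy (hxy : x ≤ y) (hyz : y < z) :
    NondecReplaceable [z, x, y] [x, z, y] := by
  refine nondecReplaceable_of_forall_sublist fun t ht htc => ?_
  rw [sublist_triple_iff] at ht
  have hxz : x < z := by order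
  rcases ht with rfl | rfl | rfl | rfl | rfl | rfl | rfl | rfl <;> simp_all [not_le_of_gt]

theorem nondecReplaceable_yxz_yzx (hxy : x < y) (hyz : y ≤ z) :
    NondecReplaceable [y, x, z] [y, z, x] := by
  intro s t r ht hc
  by_cases htxz : t = [x, z]
  · subst htxz
    exact ⟨[y, z], by simp, rfl, isChain_append_pair_append hc hxy.le hyz le_rfl⟩
  refine ⟨t, ?_, rfl, hc⟩
  have htc := hc.left_of_append.right_of_append
  rw [sublist_triple_iff] at ht
  have hxz : x < z := by order
  rcases ht with rfl | rfl | rfl | rfl | rfl | rfl | rfl | rfl <;> simp_all [not_le_of_gt]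

theorem nondecReplaceable_yzx_yxz (hxy : x < y) (hyz : y ≤ z) :
    NondecReplaceable [y, z, x] [y, x, z] := by
  refine nondecReplaceable_of_forall_sublist fun t ht htc => ?_
  rw [sublist_triple_iff] at ht
  have hxz : x < z := by order
  rcases ht with rfl | rfl | rfl | rfl | rfl | rfl | rfl | rfl <;> simp_all [not_le_of_gt]

end KnuthTriples

theorem HasNondecSublist.le_two_of_append {α β : List σ}
    (hα : α.IsChain (fun a b => b < a)) (hβ : β.IsChain (fun a b => b < a)) {k : ℕ}
    (hk : HasNondecSublist (α ++ β) k) : k ≤ 2 := by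
  obtain ⟨w, hw, hchain, rfl⟩ := hk
  obtain ⟨s, t, rfl, hs, ht⟩ := List.sublist_append_iff.1 hw
  have hs_le : s.length ≤ 1 :=
    HasNondecSublist.le_one hα ⟨s, hs, hchain.left_of_append, rfl⟩
  have ht_le : t.length ≤ 1 :=
    HasNondecSublist.le_one hβ ⟨t, ht, hchain.right_of_append, rfl⟩
  simp only [List.length_append]
  omega

end NondecreasingSublist

theorem KnuthStep.hasNondecSublist_iff {n : ℕ} {u v : Word n} (h : KnuthStep n u v) (k : ℕ) :
    HasNondecSublist u k ↔ HasNondecSublist v k := by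
  cases h with
  | left u v x y z hxy hyz =>
    exact ⟨.of_nondecReplaceable (nondecReplaceable_xzy_zxy hxy hyz) u v,
      .of_nondecReplaceable (nondecReplaceable_zxy_xzy hxy hyz) u v⟩
  | right u v x y z hxy hyz =>
    exact ⟨.of_nondecReplaceable (nondecReplaceable_yxz_yzx hxy hyz) u v,
      .of_nondecReplaceable (nondecReplaceable_yzx_yxz hxy hyz) u v⟩

theorem PlacticEq.hasNondecSublist_iff {n : ℕ} {u v : Word n} (h : PlacticEq n u v) (k : ℕ) :
    HasNondecSublist u k ↔ HasNondecSublist v k := by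
  induction h with
  | rel _ _ hstep => exact hstep.hasNondecSublist_iff k
  | refl => rfl
  | symm _ _ _ ih => exact ih.symm
  | trans _ _ _ _ _ ih₁ ih₂ => exact ih₁.trans ih₂

theorem statement0_general {n : ℕ} (α β : Word n) (hα : IsColumn α) (hβ : IsColumn β)
    (rs : List (Word n)) (hrs : IsTableauRows rs)
    (heq : PlacticEq n rs.flatten (α ++ β)) :
    (rs.getLastD []).length ≤ 2 := by
  rcases List.eq_nil_or_concat rs with rfl | ⟨rs, r, rfl⟩
  · simp
  rw [List.concat_eq_append] at hrs heq ⊢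
  have hrow : IsRow r := (hrs.1 r (by simp)).2
  have hbottom : HasNondecSublist (rs ++ [r]).flatten r.length :=
    ⟨r, List.sublist_flatten_of_mem (by simp), hrow, rfl⟩
  simpa using ((heq.hasNondecSublist_iff _).1 hbottom).le_two_of_append hα.2 hβ.2

/-- Let `α` and `β` be columns over `A` with `α ⋡ β`.  Then
the tableau `P(αβ)` contains at most two columns.  (Here `P(αβ)` is presented
by its list of rows `rs`, from top to bottom: it is a tableau whose word
`rs.flatten` represents the same element of `M_n` as `αβ`; its number of
columns is the length of its longest row, i.e. of its last (bottom) row.) -/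
theorem statement0 {n : ℕ} (α β : Word n) (hα : IsColumn α) (hβ : IsColumn β)
    (hnge : ¬ ColGE α β) (rs : List (Word n)) (hrs : IsTableauRows rs)
    (heq : PlacticEq n rs.flatten (α ++ β)) :
    (rs.getLastD []).length ≤ 2 :=
  statement0_general α β hα hβ rs hrs heq
end

section
/- Let α and β be columns over A with α ⋡ β, and suppose that the tableau P(αβ) contains exactly two columns. Then the left column of P(αβ) contains strictly more symbols than α. -/
/-!
The length of the longest strictly decreasing subsequence of a word is invariant under the
Knuth relations. If `α ⋡ β`, then `αβ` has a strictly decreasing subsequence longer than `α`: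
either `β` itself, or the part of `α` down to a letter `α_i > β_i` followed by the part of `β`
from `β_i` on. A strictly decreasing subsequence of a tableau takes at most one letter from each
of its weakly increasing rows, so `P(αβ)` has more than `|α|` rows, i.e. its left column is
longer than `α`.
-/

lemma List.sublist_triple {α : Type*} {a b c : α} {l : List α} (h : l.Sublist [a, b, c]) :
    l = [] ∨ l = [a] ∨ l = [b] ∨ l = [a, b] ∨ l = [c] ∨ l = [a, c] ∨ l = [b, c] ∨
      l = [a, b, c] := by
  simpa [List.sublists] using List.mem_sublists.2 h

section DecreasingSublist

variable {A : Type*} [LinearOrder A]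

def HasDecreasingSublist (w : List A) (k : ℕ) : Prop :=
  ∃ l : List A, l.Sublist w ∧ l.SortedGT ∧ k ≤ l.length

/-- The bounds on the new letters keep the replacement strictly decreasing inside any context
`u ++ m ++ v`. -/
def ReplacesDecreasingSublists (m m' : List A) : Prop :=
  ∀ l : List A, l.Sublist m → l.SortedGT →
    ∃ l' : List A, l'.Sublist m' ∧ l'.SortedGT ∧ l'.length = l.length ∧
      ∀ b' ∈ l', ∃ b₁ ∈ l, ∃ b₂ ∈ l, b₁ ≤ b' ∧ b' ≤ b₂

lemma ReplacesDecreasingSublists.of_forall_sublist {m m' : List A}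
    (h : ∀ l : List A, l.Sublist m → l.SortedGT → l.Sublist m') :
    ReplacesDecreasingSublists m m' := fun l hl hs =>
  ⟨l, h l hl hs, hs, rfl, fun b hb => ⟨b, hb, b, hb, le_rfl, le_rfl⟩⟩

lemma ReplacesDecreasingSublists.hasDecreasingSublist_append {m m' : List A}
    (h : ReplacesDecreasingSublists m m') {u v : List A} {k : ℕ}
    (hw : HasDecreasingSublist (u ++ m ++ v) k) : HasDecreasingSublist (u ++ m' ++ v) k := by
  obtain ⟨l, hl, hsort, hk⟩ := hw
  obtain ⟨l₁₂, l₃, rfl, h₁₂, h₃⟩ := List.sublist_append_iff.1 hl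
  obtain ⟨l₁, l₂, rfl, h₁, h₂⟩ := List.sublist_append_iff.1 h₁₂
  rw [List.sortedGT_iff_pairwise, List.pairwise_append, List.pairwise_append] at hsort
  obtain ⟨⟨p₁, p₂, p₁₂⟩, p₃, p₁₂₃⟩ := hsort
  obtain ⟨l₂', h₂', s₂', hlen, hbound⟩ := h l₂ h₂ p₂.sortedGT
  refine ⟨l₁ ++ l₂' ++ l₃, (h₁.append h₂').append h₃, ?_, by simpa [hlen] using hk⟩
  rw [List.sortedGT_iff_pairwise, List.pairwise_append, List.pairwise_append]
  refine ⟨⟨p₁, s₂'.pairwise, fun a ha b hb => ?_⟩, p₃, fun a ha c hc => ?_⟩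
  · obtain ⟨-, -, b₂, hb₂, -, hle⟩ := hbound b hb
    exact lt_of_le_of_lt hle (p₁₂ a ha b₂ hb₂)
  · rcases List.mem_append.1 ha with ha | ha
    · exact p₁₂₃ a (List.mem_append_left _ ha) c hc
    · obtain ⟨b₁, hb₁, -, -, hle, -⟩ := hbound a ha
      exact lt_of_lt_of_le (p₁₂₃ b₁ (List.mem_append_right _ hb₁) c hc) hle

section KnuthRelations

variable {x y z : A}

lemma replacesDecreasingSublists_xzy_zxy (hxy : x ≤ y) (hyz : y < z) :
    ReplacesDecreasingSublists [x, z, y] [z, x, y] := by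
  refine .of_forall_sublist fun l hl hs => ?_
  rcases List.sublist_triple hl with rfl | rfl | rfl | rfl | rfl | rfl | rfl | rfl <;>
    simp [List.sortedGT_iff_pairwise] at hs ⊢ <;> order

lemma replacesDecreasingSublists_zxy_xzy (hxy : x ≤ y) (hyz : y < z) :
    ReplacesDecreasingSublists [z, x, y] [x, z, y] := by
  intro l hl hs
  by_cases hzx : l = [z, x]
  · subst hzx
    exact ⟨[z, y], by simp, by simp [List.sortedGT_iff_pairwise, hyz], rfl,
      by simp [hxy, hyz.le]⟩
  · refine ⟨l, ?_, hs, rfl, fun b hb => ⟨b, hb, b, hb, le_rfl, le_rfl⟩⟩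
    rcases List.sublist_triple hl with rfl | rfl | rfl | rfl | rfl | rfl | rfl | rfl <;>
      simp [List.sortedGT_iff_pairwise] at hs hzx ⊢
    order

lemma replacesDecreasingSublists_yxz_yzx (hxy : x < y) (hyz : y ≤ z) :
    ReplacesDecreasingSublists [y, x, z] [y, z, x] := by
  refine .of_forall_sublist fun l hl hs => ?_
  rcases List.sublist_triple hl with rfl | rfl | rfl | rfl | rfl | rfl | rfl | rfl <;>
    simp [List.sortedGT_iff_pairwise] at hs ⊢ <;> order

lemma replacesDecreasingSublists_yzx_yxz (hxy : x < y) (hyz : y ≤ z) :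
    ReplacesDecreasingSublists [y, z, x] [y, x, z] := by
  intro l hl hs
  by_cases hzx : l = [z, x]
  · subst hzx
    exact ⟨[y, x], by simp, by simp [List.sortedGT_iff_pairwise, hxy], rfl,
      by simp [hxy.le, hyz]⟩
  · refine ⟨l, ?_, hs, rfl, fun b hb => ⟨b, hb, b, hb, le_rfl, le_rfl⟩⟩
    rcases List.sublist_triple hl with rfl | rfl | rfl | rfl | rfl | rfl | rfl | rfl <;>
      simp [List.sortedGT_iff_pairwise] at hs hzx ⊢
    order

end KnuthRelations

lemma length_le_one_of_sublist_of_sortedLE {r l : List A} (hr : r.SortedLE)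
    (hl : l.Sublist r) (hs : l.SortedGT) : l.length ≤ 1 := by
  match l, hl, hs with
  | [], _, _ | [_], _, _ => simp
  | a :: b :: _, hl, hs =>
    have hab : a ≤ b := List.rel_of_pairwise_cons (hr.pairwise.sublist hl) (by simp)
    have hba : b < a := List.rel_of_pairwise_cons hs.pairwise (by simp)
    exact absurd hab (not_le.2 hba)

lemma length_le_length_of_sublist_flatten {rs : List (List A)} (hrows : ∀ r ∈ rs, r.SortedLE)
    {l : List A} (hl : l.Sublist rs.flatten) (hs : l.SortedGT) : l.length ≤ rs.length := by
  induction rs generalizing l with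
  | nil => simp_all
  | cons r rs ih =>
    obtain ⟨l₁, l₂, rfl, h₁, h₂⟩ := List.sublist_append_iff.1 (List.flatten_cons ▸ hl)
    rw [List.sortedGT_iff_pairwise, List.pairwise_append] at hs
    have hl₁ := length_le_one_of_sublist_of_sortedLE (hrows r (by simp)) h₁ hs.1.sortedGT
    have hl₂ := ih (fun r' hr' => hrows r' (by simp [hr'])) h₂ hs.2.1.sortedGT
    simp only [List.length_append, List.length_cons]
    omega

end DecreasingSublist

lemma KnuthStep.hasDecreasingSublist_iff {n : ℕ} {u v : Word n} (h : KnuthStep n u v) (k : ℕ) :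
    HasDecreasingSublist u k ↔ HasDecreasingSublist v k := by
  cases h with
  | left u v x y z hxy hyz =>
    exact ⟨(replacesDecreasingSublists_xzy_zxy hxy hyz).hasDecreasingSublist_append,
      (replacesDecreasingSublists_zxy_xzy hxy hyz).hasDecreasingSublist_append⟩
  | right u v x y z hxy hyz =>
    exact ⟨(replacesDecreasingSublists_yxz_yzx hxy hyz).hasDecreasingSublist_append,
      (replacesDecreasingSublists_yzx_yxz hxy hyz).hasDecreasingSublist_append⟩

lemma PlacticEq.hasDecreasingSublist_iff {n : ℕ} {u v : Word n} (h : PlacticEq n u v) (k : ℕ) :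
    HasDecreasingSublist u k ↔ HasDecreasingSublist v k := by
  induction h with
  | rel _ _ h => exact h.hasDecreasingSublist_iff k
  | refl => rfl
  | symm _ _ _ ih => exact ih.symm
  | trans _ _ _ _ _ ih₁ ih₂ => exact ih₁.trans ih₂

lemma hasDecreasingSublist_of_not_colGE {n : ℕ} {α β : Word n} (hα : IsColumn α)
    (hβ : IsColumn β) (h : ¬ ColGE α β) : HasDecreasingSublist (α ++ β) (α.length + 1) := by
  by_cases hlen : β.length ≤ α.length
  · obtain ⟨i, a, b, ha, hb, hba⟩ :
        ∃ (i : ℕ) (a b : Fin n),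
          α.reverse[i]? = some a ∧ β.reverse[i]? = some b ∧ b < a := by
      by_contra! h'
      exact h ⟨hlen, h'⟩
    have hα' : (α.reverse.drop i).reverse.Sublist α := by
      simpa using (List.drop_sublist i α.reverse).reverse
    have hβ' : (β.reverse.take (i + 1)).reverse.Sublist β := by
      simpa using (List.take_sublist (i + 1) β.reverse).reverse
    refine ⟨_, hα'.append hβ', ?_, ?_⟩
    · rw [List.sortedGT_iff_isChain, List.isChain_append]
      refine ⟨hα.2.sublist hα', hβ.2.sublist hβ', ?_⟩
      simp [List.head?_drop, List.getLast?_take, ha, hb, hba]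
    · have hi := (List.getElem?_eq_some_iff.1 hb).1
      simp only [List.length_append, List.length_reverse, List.length_drop,
        List.length_take] at hi ⊢
      omega
  · exact ⟨β, List.sublist_append_right _ _, List.sortedGT_iff_isChain.2 hβ.2, by omega⟩

theorem statement1_general {n : ℕ} (α β : Word n) (hα : IsColumn α) (hβ : IsColumn β)
    (hnge : ¬ ColGE α β) (rs : List (Word n)) (hrs : IsTableauRows rs)
    (heq : PlacticEq n rs.flatten (α ++ β)) :
    α.length < (rs.filterMap List.head?).length := by
  obtain ⟨l, hl, hsort, hlen⟩ :=
    (heq.hasDecreasingSublist_iff _).2 (hasDecreasingSublist_of_not_colGE hα hβ hnge)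
  have hrows : l.length ≤ rs.length := length_le_length_of_sublist_flatten
    (fun r hr => List.sortedLE_iff_isChain.2 (hrs.1 r hr).2) hl hsort
  have hheads : (rs.filterMap List.head?).length = rs.length :=
    List.filterMap_length_eq_length.2 fun r hr => List.isSome_head?.2 (hrs.1 r hr).1
  omega

/-- Let `α` and `β` be columns over `A` with `α ⋡ β`, and
suppose the tableau `P(αβ)` contains exactly two columns.  Then the left
column of `P(αβ)` contains strictly more symbols than `α`.  (Here `P(αβ)` is
presented by its list of rows `rs`, from top to bottom: it is a tableau whose
word `rs.flatten` represents the same element of `M_n` as `αβ`; its number of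
columns is the length of its last (bottom, longest) row, and its left column
consists of the first letters of its rows, read from top to bottom.) -/
theorem statement1 {n : ℕ} (α β : Word n) (hα : IsColumn α) (hβ : IsColumn β)
    (hnge : ¬ ColGE α β) (rs : List (Word n)) (hrs : IsTableauRows rs)
    (heq : PlacticEq n rs.flatten (α ++ β))
    (htwo : (rs.getLastD []).length = 2) :
    α.length < (rs.filterMap List.head?).length :=
  statement1_general α β hα hβ hnge rs hrs heq
end

section
/- Let 𝕂 be a field and let F = {l − r : (l → r) ∈ T}, a finite subset of the free associative algebra 𝕂⟨C⟩ over the finite alphabet C. Then the Plactic algebra, i.e. the monoid algebra 𝕂[M_n], is isomorphic as a 𝕂-algebra to the quotient 𝕂⟨C⟩/⟨F⟩ of the free associative algebra by the two-sided ideal generated by F. -/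
/-- The congruence on the free monoid `A*` generated by the Knuth relations. -/
def placticCon (n : ℕ) : Con (FreeMonoid (Fin n)) :=
  conGen (fun u v => KnuthStep n (FreeMonoid.toList u) (FreeMonoid.toList v))

/-- The Plactic monoid `M_n`, as the quotient of the free monoid `A*` by the
congruence generated by the Knuth relations. -/
abbrev PlacticMonoid (n : ℕ) := (placticCon n).Quotient

/-- The monomial of the free associative algebra `𝕂⟨C⟩` corresponding to a
word over `C`. -/
noncomputable def colWordProd (𝕂 : Type) [Field 𝕂] {n : ℕ} (u : CWord n) :
    FreeAlgebra 𝕂 (CLetter n) :=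
  (u.map (FreeAlgebra.ι 𝕂)).prod

/-- The subset `F = {l − r : (l → r) ∈ T}` of the free associative algebra
`𝕂⟨C⟩`. -/
def Fset (𝕂 : Type) [Field 𝕂] (n : ℕ) : Set (FreeAlgebra 𝕂 (CLetter n)) :=
  {x | ∃ l r : CWord n, TRule n l r ∧ x = colWordProd 𝕂 l - colWordProd 𝕂 r}

/-! Both sides are presentations of the same monoid. The letters `c_a = c_{[a]}` satisfy the Knuth
relations modulo `T`: two letters forming a column collect into that column by a rule of `T`, and
each Knuth relation is a rule of `T` between a letter and a two-letter column. Conversely every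
rule of `T` holds in `M_n`. Since every column is, modulo `T`, the product of its letters, the
maps `a ↦ c_a` and `c_α ↦ α` are mutually inverse, so `(C, T)` presents `M_n`. Finally, the
monoid algebra of any presented monoid is the free algebra modulo the differences of the two
sides of its relations, which here is `𝕂⟨C⟩/⟨F⟩`. -/

namespace PresentedMonoid

variable (R : Type*) [CommRing R] {α : Type*} (rels : FreeMonoid α → FreeMonoid α → Prop)

def algebraRelators : Set (FreeAlgebra R α) :=
  {x | ∃ u v, rels u v ∧
    x = FreeMonoid.lift (FreeAlgebra.ι R) u - FreeMonoid.lift (FreeAlgebra.ι R) v}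

abbrev FreeAlgebraQuotient := (TwoSidedIdeal.span (algebraRelators R rels)).ringCon.Quotient

variable {R rels}

theorem mk_ofList (l : List α) : mk rels (FreeMonoid.ofList l) = (l.map (of rels)).prod := by
  induction l with
  | nil => rfl
  | cons a l ih => rw [FreeMonoid.ofList_cons, map_mul, ih]; rfl

theorem mkₐ_lift_ι_eq_of_rel {u v : FreeMonoid α} (h : rels u v) :
    RingCon.mkₐ R (TwoSidedIdeal.span (algebraRelators R rels)).ringCon
        (FreeMonoid.lift (FreeAlgebra.ι R) u) =
      RingCon.mkₐ R _ (FreeMonoid.lift (FreeAlgebra.ι R) v) :=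
  Quotient.sound' <| (TwoSidedIdeal.rel_iff _ _ _).mpr <|
    TwoSidedIdeal.subset_span ⟨u, v, h, rfl⟩

theorem freeAlgebraLift_freeMonoidLift_ι (u : FreeMonoid α) :
    FreeAlgebra.lift R (fun x => MonoidAlgebra.of R _ (of rels x))
        (FreeMonoid.lift (FreeAlgebra.ι R) u) = MonoidAlgebra.of R _ (mk rels u) := by
  induction u using FreeMonoid.inductionOn' with
  | one => simp [MonoidAlgebra.one_def]
  | of_mul x u ih =>
    rw [map_mul, map_mul, map_mul, ih, FreeMonoid.lift_eval_of, FreeAlgebra.lift_ι_apply,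
      ← map_mul]
    rfl

variable (R rels)

noncomputable def toFreeAlgebraQuotient :
    MonoidAlgebra R (PresentedMonoid rels) →ₐ[R] FreeAlgebraQuotient R rels :=
  MonoidAlgebra.lift R _ _ <| PresentedMonoid.lift
    (fun x => RingCon.mkₐ R _ (FreeAlgebra.ι R x)) fun _ _ h => by
      simpa [FreeMonoid.lift_apply, map_list_prod, List.map_map, Function.comp_def] using
        mkₐ_lift_ι_eq_of_rel (R := R) h

noncomputable def ofFreeAlgebraQuotient :
    FreeAlgebraQuotient R rels →ₐ[R] MonoidAlgebra R (PresentedMonoid rels) :=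
  let f := FreeAlgebra.lift R fun x => MonoidAlgebra.of R _ (of rels x)
  RingCon.liftₐ _ f <| (TwoSidedIdeal.ringCon_le_iff.mp <| TwoSidedIdeal.span_le.mpr <| by
    rintro _ ⟨u, v, h, rfl⟩
    rw [SetLike.mem_coe, TwoSidedIdeal.mem_ker, map_sub, sub_eq_zero,
      freeAlgebraLift_freeMonoidLift_ι, freeAlgebraLift_freeMonoidLift_ι, mk_eq_mk_of_rel h] :
    _ ≤ (TwoSidedIdeal.ker f).ringCon)

noncomputable def monoidAlgebraEquivFreeAlgebraQuotient :
    MonoidAlgebra R (PresentedMonoid rels) ≃ₐ[R] FreeAlgebraQuotient R rels :=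
  AlgEquiv.ofAlgHom (toFreeAlgebraQuotient R rels) (ofFreeAlgebraQuotient R rels)
    (by ext; simp [toFreeAlgebraQuotient, ofFreeAlgebraQuotient])
    (MonoidAlgebra.algHom_ext' (PresentedMonoid.ext _ fun _ => by
      simp [toFreeAlgebraQuotient, ofFreeAlgebraQuotient]) (by ext))

end PresentedMonoid

section Columns

variable {n : ℕ}

def knuthRel (n : ℕ) (u v : FreeMonoid (Fin n)) : Prop := KnuthStep n u.toList v.toList

def columnRel (n : ℕ) (u v : FreeMonoid (CLetter n)) : Prop := TRule n u.toList v.toList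

theorem IsColumn.length_le {w : Word n} (h : IsColumn w) : w.length ≤ n := by
  simpa using List.Nodup.length_le_card
    ((List.isChain_iff_pairwise.mp h.2).imp fun h => (ne_of_lt h).symm)

instance : Finite (CLetter n) :=
  have := (List.finite_length_le (Fin n) n).to_subtype
  Finite.of_injective
    (fun c : CLetter n => (⟨c.1, c.2.length_le⟩ : {l : Word n | l.length ≤ n}))
    fun _ _ hab => by simpa [Subtype.ext_iff] using hab

theorem fset_finite (𝕂 : Type) [Field 𝕂] (n : ℕ) : (Fset 𝕂 n).Finite := by
  have hS : {l : CWord n | l.length ≤ 2}.Finite := List.finite_length_le _ 2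
  refine ((hS.prod hS).image fun p => colWordProd 𝕂 p.1 - colWordProd 𝕂 p.2).subset ?_
  rintro x ⟨l, r, hrule, rfl⟩
  exact ⟨(l, r), by cases hrule <;> simp, rfl⟩

def singleColumn (a : Fin n) : CLetter n := ⟨[a], List.cons_ne_nil _ _, List.isChain_singleton _⟩

theorem isColumn_pair {a b : Fin n} (h : b < a) : IsColumn [a, b] :=
  ⟨List.cons_ne_nil _ _, List.isChain_pair.mpr h⟩

theorem IsColumn.tail {a : Fin n} {β : Word n} (h : IsColumn (a :: β)) (hβ : β ≠ []) :
    IsColumn β :=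
  ⟨hβ, h.2.tail⟩

theorem not_colGE_singleton_of_isColumn_cons {a : Fin n} {β : Word n} (h : IsColumn (a :: β))
    (hβ : β ≠ []) : ¬ ColGE [a] β := by
  rintro ⟨hlen, hle⟩
  obtain ⟨b, rfl⟩ : ∃ b, β = [b] := List.length_eq_one_iff.mp (by
    have := List.length_pos_iff.mpr hβ
    simp only [List.length_singleton] at hlen; omega)
  exact (List.isChain_pair.mp h.2).not_ge (hle 0 a b rfl rfl)

theorem TRule.cons_column {a : Fin n} {β : Word n} (h : IsColumn (a :: β)) (hβ : β ≠ []) :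
    TRule n [singleColumn a, ⟨β, h.tail hβ⟩] [⟨a :: β, h⟩] :=
  .one _ _ _ (not_colGE_singleton_of_isColumn_cons h hβ) ⟨h, .refl _⟩

theorem not_colGE_singleton_pair (x a b : Fin n) : ¬ ColGE [x] [a, b] :=
  fun h => by simpa using h.1

theorem TRule.knuth_left {x y z : Fin n} (h1 : x ≤ y) (h2 : y < z) :
    TRule n [singleColumn x, ⟨[z, y], isColumn_pair h2⟩]
      [⟨[z, x], isColumn_pair (h1.trans_lt h2)⟩, singleColumn y] := by
  refine .two _ _ _ _ (not_colGE_singleton_pair _ _ _) ⟨isColumn_pair (h1.trans_lt h2),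
    (singleColumn y).2, ⟨by simp [singleColumn], ?_⟩, .rel _ _ ?_⟩
  · rintro (_ | i) a b ha hb
    · obtain rfl := Option.some.inj ha
      obtain rfl := Option.some.inj hb
      exact h1
    · simp [singleColumn] at hb
  · simpa [singleColumn] using KnuthStep.left [] [] x y z h1 h2

theorem TRule.knuth_right {x y z : Fin n} (h1 : x < y) (h2 : y ≤ z) :
    TRule n [singleColumn y, ⟨[z, x], isColumn_pair (h1.trans_le h2)⟩]
      [⟨[y, x], isColumn_pair h1⟩, singleColumn z] := by
  refine .two _ _ _ _ (not_colGE_singleton_pair _ _ _) ⟨isColumn_pair h1,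
    (singleColumn z).2, ⟨by simp [singleColumn], ?_⟩, .symm _ _ (.rel _ _ ?_)⟩
  · rintro (_ | i) a b ha hb
    · obtain rfl := Option.some.inj ha
      obtain rfl := Option.some.inj hb
      exact h1.le.trans h2
    · simp [singleColumn] at hb
  · simpa [singleColumn] using KnuthStep.right [] [] x y z h1 h2

end Columns

open PresentedMonoid

section ColumnMonoid

variable {n : ℕ}

theorem TRule.prod_map_of_eq {l r : CWord n} (h : TRule n l r) :
    (l.map (of (columnRel n))).prod = (r.map (of (columnRel n))).prod := by
  rw [← mk_ofList, ← mk_ofList]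
  exact mk_eq_mk_of_rel h

theorem of_singleColumn_mul_of {a : Fin n} {β : Word n} (h : IsColumn (a :: β)) (hβ : β ≠ []) :
    of (columnRel n) (singleColumn a) * of _ ⟨β, h.tail hβ⟩ = of _ ⟨a :: β, h⟩ := by
  simpa using (TRule.cons_column h hβ).prod_map_of_eq

theorem prod_map_of_singleColumn {α : Word n} (h : IsColumn α) :
    (α.map fun a => of (columnRel n) (singleColumn a)).prod = of _ ⟨α, h⟩ := by
  induction α with
  | nil => exact absurd rfl h.1
  | cons a β ih =>
    rcases eq_or_ne β [] with rfl | hβ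
    · simp [singleColumn]
    · rw [List.map_cons, List.prod_cons, ih (h.tail hβ), of_singleColumn_mul_of h hβ]

theorem of_singleColumn_mul_of_singleColumn {a b : Fin n} (h : b < a) :
    of (columnRel n) (singleColumn a) * of _ (singleColumn b) = of _ ⟨[a, b], isColumn_pair h⟩ :=
  of_singleColumn_mul_of (isColumn_pair h) (List.cons_ne_nil _ _)

theorem knuth_left_singleColumn {x y z : Fin n} (h1 : x ≤ y) (h2 : y < z) :
    of (columnRel n) (singleColumn x) * of _ (singleColumn z) * of _ (singleColumn y) =
      of _ (singleColumn z) * of _ (singleColumn x) * of _ (singleColumn y) := by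
  have hzy := of_singleColumn_mul_of_singleColumn h2
  have hzx := of_singleColumn_mul_of_singleColumn (h1.trans_lt h2)
  have hrule := (TRule.knuth_left h1 h2).prod_map_of_eq
  simp only [List.map_cons, List.map_nil, List.prod_cons, List.prod_nil, mul_one] at hrule
  rw [mul_assoc, hzy, hrule, hzx]

theorem knuth_right_singleColumn {x y z : Fin n} (h1 : x < y) (h2 : y ≤ z) :
    of (columnRel n) (singleColumn y) * of _ (singleColumn x) * of _ (singleColumn z) =
      of _ (singleColumn y) * of _ (singleColumn z) * of _ (singleColumn x) := by
  have hyx := of_singleColumn_mul_of_singleColumn h1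
  have hzx := of_singleColumn_mul_of_singleColumn (h1.trans_le h2)
  have hrule := (TRule.knuth_right h1 h2).prod_map_of_eq
  simp only [List.map_cons, List.map_nil, List.prod_cons, List.prod_nil, mul_one] at hrule
  rw [mul_assoc _ (of _ (singleColumn z)), hyx, hzx]
  exact hrule.symm

theorem KnuthStep.prod_map_of_singleColumn_eq {u v : Word n} (h : KnuthStep n u v) :
    (u.map fun a => of (columnRel n) (singleColumn a)).prod =
      (v.map fun a => of (columnRel n) (singleColumn a)).prod := by
  cases h with
  | left p q x y z h1 h2 =>
    simp only [List.map_append, List.prod_append, List.map_cons, List.map_nil, List.prod_cons,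
      List.prod_nil, mul_one, ← mul_assoc, knuth_left_singleColumn h1 h2]
  | right p q x y z h1 h2 =>
    simp only [List.map_append, List.prod_append, List.map_cons, List.map_nil, List.prod_cons,
      List.prod_nil, mul_one, ← mul_assoc, knuth_right_singleColumn h1 h2]

end ColumnMonoid

section PlacticColumnPresentation

variable {n : ℕ}

theorem PlacticEq.mk_eq {u v : Word n} (h : PlacticEq n u v) :
    mk (knuthRel n) (FreeMonoid.ofList u) = mk (knuthRel n) (FreeMonoid.ofList v) := by
  induction h with
  | rel _ _ h => exact mk_eq_mk_of_rel h
  | refl => rfl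
  | symm _ _ _ ih => exact ih.symm
  | trans _ _ _ _ _ ih₁ ih₂ => exact ih₁.trans ih₂

theorem TRule.placticEq_evalC {l r : CWord n} (h : TRule n l r) :
    PlacticEq n (evalC l) (evalC r) := by
  cases h with
  | one _ _ _ _ hP => simpa [evalC] using hP.2
  | two _ _ _ _ _ hP => simpa [evalC] using hP.2.2.2

theorem lift_mk_ofList_val (u : FreeMonoid (CLetter n)) :
    FreeMonoid.lift (fun c => mk (knuthRel n) (FreeMonoid.ofList c.1)) u =
      mk (knuthRel n) (FreeMonoid.ofList (evalC u.toList)) := by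
  rw [FreeMonoid.lift_apply, evalC, FreeMonoid.ofList_flatten, map_list_prod, List.map_map,
    List.map_map]
  rfl

def placticMonoidEquivKnuthPresentation : PlacticMonoid n ≃* PresentedMonoid (knuthRel n) :=
  MulEquiv.refl _

def toColumnMonoid : PresentedMonoid (knuthRel n) →* PresentedMonoid (columnRel n) :=
  PresentedMonoid.lift (fun a => of _ (singleColumn a)) fun _ _ h => by
    rw [FreeMonoid.lift_apply, FreeMonoid.lift_apply]
    exact KnuthStep.prod_map_of_singleColumn_eq h

def ofColumnMonoid : PresentedMonoid (columnRel n) →* PresentedMonoid (knuthRel n) :=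
  PresentedMonoid.lift (fun c => mk (knuthRel n) (FreeMonoid.ofList c.1)) fun _ _ h => by
    rw [lift_mk_ofList_val, lift_mk_ofList_val]
    exact (TRule.placticEq_evalC h).mk_eq

def knuthEquivColumnPresentation : PresentedMonoid (knuthRel n) ≃* PresentedMonoid (columnRel n) :=
  MonoidHom.toMulEquiv toColumnMonoid ofColumnMonoid (PresentedMonoid.ext _ fun _ => rfl)
    (PresentedMonoid.ext _ fun c => by
      rw [MonoidHom.comp_apply, ofColumnMonoid, PresentedMonoid.lift_of, mk_ofList, map_list_prod,
        List.map_map]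
      exact prod_map_of_singleColumn c.2)

theorem fset_eq_algebraRelators (𝕂 : Type) [Field 𝕂] (n : ℕ) :
    Fset 𝕂 n = PresentedMonoid.algebraRelators 𝕂 (columnRel n) := by
  ext x
  constructor
  · rintro ⟨l, r, h, rfl⟩
    exact ⟨.ofList l, .ofList r, h, by simp [colWordProd, FreeMonoid.lift_ofList]⟩
  · rintro ⟨u, v, h, rfl⟩
    exact ⟨u.toList, v.toList, h, by simp [colWordProd, FreeMonoid.lift_apply]⟩

end PlacticColumnPresentation

/-- Let `𝕂` be a field and `F = {l − r : (l → r) ∈ T}`, a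
finite subset of the free associative algebra `𝕂⟨C⟩` over the finite alphabet
`C`.  Then the Plactic algebra `𝕂[M_n]` is isomorphic as a `𝕂`-algebra to the
quotient `𝕂⟨C⟩/⟨F⟩` of the free associative algebra by the two-sided ideal
generated by `F`. -/
theorem statement8 (𝕂 : Type) [Field 𝕂] (n : ℕ) :
    (Fset 𝕂 n).Finite ∧
    Nonempty (MonoidAlgebra 𝕂 (PlacticMonoid n) ≃ₐ[𝕂]
      (TwoSidedIdeal.span (Fset 𝕂 n)).ringCon.Quotient) := by
  refine ⟨fset_finite 𝕂 n, ⟨?_⟩⟩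
  rw [fset_eq_algebraRelators]
  exact (MonoidAlgebra.domCongr 𝕂 𝕂
    (placticMonoidEquivKnuthPresentation.trans knuthEquivColumnPresentation)).trans
    (PresentedMonoid.monoidAlgebraEquivFreeAlgebraQuotient 𝕂 (columnRel n))
end

section
/- Let γ ∈ A and let α, β be columns over A with α ⪰ β. (1) If c_γ c_α c_β → c_{α'} c_η c_β → c_{α'} c_{β'} c_ζ is a sequence of two applications of rules of T (the first applied to c_γ c_α, the second to c_η c_β), then α' ⪰ β'. (2) If c_γ c_α c_β → c_{α'} c_η c_β → c_{α'} c_{β'} is such a sequence, then α' ⪰ β'. (3) If c_γ c_α c_β → c_{α'} c_β is a single application of a rule of T to c_γ c_α, then α' ⪰ β. -/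
/-!
Down-closed subsets of the alphabet are encoded as antitone predicates `p : Fin n → Bool`.
The proof rests on Greene's invariant for decreasing subwords: for every such `p`, the set of
lengths of strictly decreasing subwords of the restriction of `w` to `p` does not change under
the Knuth relations, and the restriction of a Knuth relation is again one (or trivial).
On the reading `α' η` of a two-column tableau the longest such subword has length `#(α' ∩ p)`,
and `α ⪰ β` between columns means exactly `#(β ∩ p) ≤ #(α ∩ p)` for all `p`. Evaluating the
invariant on `γ α` shows `#(α ∩ p) ≤ #(α' ∩ p)` and that `η` is a single letter `b ∈ α`.
Inserting `b` into `β` raises `#(β ∩ p)` only when `b ∈ p` lies above all of `β ∩ p`, and then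
`#(β ∩ p) ≤ #(α ∩ p ∩ {< b}) < #(α ∩ p)`. Part (3) only needs that `γ α` and `α'` are
permutations of each other.
-/

open List

section DecreasingSublists

variable {α : Type*} [LinearOrder α]

def decSublistLengths (w : List α) : Set ℕ :=
  {m | ∃ s, s <+ w ∧ s.Pairwise (· > ·) ∧ s.length = m}

lemma length_mem_decSublistLengths {w : List α} (hw : w.Pairwise (· > ·)) :
    w.length ∈ decSublistLengths w :=
  ⟨w, .refl w, hw, rfl⟩

lemma decSublistLengths_mono {v w : List α} (h : v <+ w) :
    decSublistLengths v ⊆ decSublistLengths w :=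
  fun _ ⟨s, hs, hd, hl⟩ => ⟨s, hs.trans h, hd, hl⟩

lemma le_length_of_mem_decSublistLengths {w : List α} {m : ℕ} (hm : m ∈ decSublistLengths w) :
    m ≤ w.length := by
  obtain ⟨s, hs, -, rfl⟩ := hm
  exact hs.length_le

lemma isGreatest_decSublistLengths_of_pairwise {w : List α} (hw : w.Pairwise (· > ·)) :
    IsGreatest (decSublistLengths w) w.length :=
  ⟨length_mem_decSublistLengths hw, fun _ => le_length_of_mem_decSublistLengths⟩

lemma isGreatest_decSublistLengths_cons {D : List α} (hD : D.Pairwise (· > ·)) (g : α) :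
    IsGreatest (decSublistLengths (g :: D)) (D.length + if ∀ d ∈ D, d < g then 1 else 0) := by
  split_ifs with hg
  · exact isGreatest_decSublistLengths_of_pairwise (pairwise_cons.2 ⟨hg, hD⟩)
  · refine ⟨by simpa using
      decSublistLengths_mono (sublist_cons_self g D) (length_mem_decSublistLengths hD), ?_⟩
    rintro _ ⟨s, hs, hsd, rfl⟩
    rcases sublist_cons_iff.1 hs with hs | ⟨r, rfl, hr⟩
    · simpa using hs.length_le
    · simp only [not_forall, not_lt] at hg
      obtain ⟨d, hd, hgd⟩ := hg
      have hr_lt : r.length ≤ D.countP (fun a => decide (a < g)) := by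
        have : r.countP (fun a => decide (a < g)) = r.length :=
          countP_eq_length.2 fun a ha => by simpa using (pairwise_cons.1 hsd).1 a ha
        exact this ▸ hr.countP_le
      have hD_ge : 0 < D.countP (fun a => ¬ decide (a < g)) :=
        countP_pos_iff.2 ⟨d, hd, by simpa using hgd⟩
      have := length_eq_countP_add_countP (fun a => decide (a < g)) (l := D)
      simp only [length_cons, add_zero]
      omega

lemma isGreatest_decSublistLengths_filter_cons {D : List α} (hD : D.Pairwise (· > ·)) (g : α)
    (p : α → Bool) :
    IsGreatest (decSublistLengths ((g :: D).filter p))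
      (D.countP p + if p g ∧ ∀ d ∈ D, p d → d < g then 1 else 0) := by
  rw [countP_eq_length_filter]
  by_cases hg : p g = true
  · simpa [filter_cons, hg] using isGreatest_decSublistLengths_cons (hD.filter p) g
  · simpa [filter_cons, hg] using isGreatest_decSublistLengths_of_pairwise (hD.filter p)

lemma decSublistLengths_append_subset {p m m' : List α}
    (h : ∀ t, t <+ m → t.Pairwise (· > ·) → ∃ t', t' <+ m' ∧ t'.Pairwise (· > ·) ∧
      t'.length = t.length ∧ ∀ b ∈ t', ∃ c ∈ t, b ≤ c) :
    decSublistLengths (p ++ m) ⊆ decSublistLengths (p ++ m') := by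
  rintro _ ⟨s, hs, hsd, rfl⟩
  obtain ⟨s₁, t, rfl, h₁, ht⟩ := sublist_append_iff.1 hs
  obtain ⟨hs₁, htd, hs₁t⟩ := pairwise_append.1 hsd
  obtain ⟨t', ht', ht'd, hlen, hle⟩ := h t ht htd
  refine ⟨s₁ ++ t', h₁.append ht', pairwise_append.2 ⟨hs₁, ht'd, fun a ha b hb => ?_⟩,
    by simp [hlen]⟩
  obtain ⟨c, hc, hbc⟩ := hle b hb
  exact hbc.trans_lt (hs₁t a ha c hc)

lemma List.Sublist.of_sublist_cons_of_forall_lt {l l' : List α} {a : α} (h : l <+ a :: l')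
    (hl : ∀ b ∈ l, b < a) : l <+ l' := by
  rcases sublist_cons_iff.1 h with h | ⟨r, rfl, -⟩
  · exact h
  · exact absurd (hl a mem_cons_self) (lt_irrefl a)

lemma List.Sublist.swap_of_pairwise_gt {t q : List α} {x z : α} (hxz : x < z)
    (ht : t <+ x :: z :: q) (htd : t.Pairwise (· > ·)) : t <+ z :: x :: q := by
  rcases sublist_cons_iff.1 ht with ht | ⟨r, rfl, hr⟩
  · exact ht.trans ((sublist_cons_self x q).cons_cons z)
  · have hrq : r <+ q := hr.of_sublist_cons_of_forall_lt fun b hb =>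
      ((pairwise_cons.1 htd).1 b hb).trans hxz
    exact (hrq.cons_cons x).cons z

lemma decSublistLengths_subset_of_swap {p q : List α} {x z : α} (hxz : x < z) :
    decSublistLengths (p ++ x :: z :: q) ⊆ decSublistLengths (p ++ z :: x :: q) :=
  decSublistLengths_append_subset fun t ht htd =>
    ⟨t, ht.swap_of_pairwise_gt hxz htd, htd, rfl, fun b hb => ⟨b, hb, le_rfl⟩⟩

lemma exists_decreasing_sublist_of_knuth_left {t q : List α} {x y z : α} (hxy : x ≤ y)
    (hyz : y < z) (ht : t <+ z :: x :: y :: q) (htd : t.Pairwise (· > ·)) :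
    ∃ t', t' <+ x :: z :: y :: q ∧ t'.Pairwise (· > ·) ∧
      t'.length = t.length ∧ ∀ b ∈ t', ∃ c ∈ t, b ≤ c := by
  rcases sublist_cons_iff.1 ht with ht | ⟨r, rfl, hr⟩
  · exact ⟨t, ht.trans ((sublist_cons_self z _).cons_cons x), htd, rfl,
      fun b hb => ⟨b, hb, le_rfl⟩⟩
  rcases sublist_cons_iff.1 hr with hr | ⟨r', rfl, hr'⟩
  · exact ⟨z :: r, (hr.cons_cons z).cons x, htd, rfl, fun b hb => ⟨b, hb, le_rfl⟩⟩
  -- `z x` is replaced by `z y`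
  simp only [pairwise_cons, mem_cons] at htd
  have hrq : r' <+ q := hr'.of_sublist_cons_of_forall_lt fun b hb =>
    (htd.2.1 b hb).trans_le hxy
  refine ⟨z :: y :: r', ((hrq.cons_cons y).cons_cons z).cons x, ?_, rfl, ?_⟩
  · simp only [pairwise_cons, mem_cons]
    grind
  · simp only [mem_cons, exists_eq_or_imp]
    grind

lemma exists_decreasing_sublist_of_knuth_right {t q : List α} {x y z : α} (hxy : x < y)
    (hyz : y ≤ z) (ht : t <+ y :: z :: x :: q) (htd : t.Pairwise (· > ·)) :
    ∃ t', t' <+ y :: x :: z :: q ∧ t'.Pairwise (· > ·) ∧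
      t'.length = t.length ∧ ∀ b ∈ t', ∃ c ∈ t, b ≤ c := by
  have hxzq : x :: q <+ x :: z :: q := (sublist_cons_self z q).cons_cons x
  rcases sublist_cons_iff.1 ht with ht | ⟨r, rfl, hr⟩
  · rcases sublist_cons_iff.1 ht with ht | ⟨r, rfl, hr⟩
    · exact ⟨t, (ht.trans hxzq).cons y, htd, rfl, fun b hb => ⟨b, hb, le_rfl⟩⟩
    rcases sublist_cons_iff.1 hr with hr | ⟨r', rfl, hr'⟩
    · exact ⟨z :: r, ((hr.cons_cons z).cons x).cons y, htd, rfl,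
        fun b hb => ⟨b, hb, le_rfl⟩⟩
    -- `z x` is replaced by `y x`
    refine ⟨y :: x :: r', ((hr'.cons z).cons_cons x).cons_cons y, ?_, rfl, ?_⟩
    · simp only [pairwise_cons, mem_cons] at htd ⊢
      grind
    · simp only [mem_cons, exists_eq_or_imp]
      grind
  · have hrxq : r <+ x :: q := by
      refine hr.of_sublist_cons_of_forall_lt fun b hb => ?_
      exact ((pairwise_cons.1 htd).1 b hb).trans_le hyz
    exact ⟨y :: r, (hrxq.trans hxzq).cons_cons y, htd, rfl, fun b hb => ⟨b, hb, le_rfl⟩⟩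

lemma antitone_decide_le (x : α) : Antitone fun a : α => decide (a ≤ x) :=
  fun _ _ hab => Bool.le_iff_imp.2 fun h => by simpa using hab.trans (by simpa using h)

lemma antitone_decide_lt (x : α) : Antitone fun a : α => decide (a < x) :=
  fun _ _ hab => Bool.le_iff_imp.2 fun h => by simpa using hab.trans_lt (by simpa using h)

lemma Antitone.and {p q : α → Bool} (hp : Antitone p) (hq : Antitone q) :
    Antitone fun a => p a && q a :=
  fun _ _ hab => Bool.le_iff_imp.2 fun h => by
    simp only [Bool.and_eq_true] at h ⊢
    exact ⟨Bool.le_iff_imp.1 (hp hab) h.1, Bool.le_iff_imp.1 (hq hab) h.2⟩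

lemma countP_eq_zero_of_pairwise_le {p : α → Bool} (hp : Antitone p) {a : α} {l : List α}
    (hl : (a :: l).Pairwise (· ≤ ·)) (ha : p a = false) : (a :: l).countP p = 0 :=
  countP_eq_zero.2 fun b hb hpb => by
    rcases mem_cons.1 hb with rfl | hb
    · simp_all
    · simpa [ha] using Bool.le_iff_imp.1 (hp ((pairwise_cons.1 hl).1 b hb)) hpb

lemma lt_countP_iff_of_pairwise_le {p : α → Bool} (hp : Antitone p) :
    ∀ {l : List α}, l.Pairwise (· ≤ ·) → ∀ {i : ℕ} (hi : i < l.length),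
      i < l.countP p ↔ p l[i] = true
  | [], _, _, hi => absurd hi (Nat.not_lt_zero _)
  | a :: l, hl, i, hi => by
    cases hpa : p a
    · rw [countP_eq_zero_of_pairwise_le hp hl hpa]
      have hai : a ≤ (a :: l)[i] := by
        cases i with
        | zero => exact le_rfl
        | succ j => exact (pairwise_cons.1 hl).1 _ (getElem_mem _)
      simpa [hpa] using fun h => Bool.le_iff_imp.1 (hp hai) h
    · cases i with
      | zero => simp [hpa]
      | succ j =>
        simpa [countP_cons, hpa] using
          lt_countP_iff_of_pairwise_le hp (pairwise_cons.1 hl).2 (Nat.lt_of_succ_lt_succ hi)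

def CountDominates (X Y : List α) : Prop :=
  ∀ p : α → Bool, Antitone p → Y.countP p ≤ X.countP p

lemma CountDominates.filter {X Y : List α} (h : CountDominates X Y) {p : α → Bool}
    (hp : Antitone p) : CountDominates (X.filter p) (Y.filter p) := fun q hq => by
  simpa only [countP_filter] using h _ (hq.and hp)

lemma CountDominates.le_length_of_mem_decSublistLengths_append {X Y : List α}
    (h : CountDominates X Y) {m : ℕ} (hm : m ∈ decSublistLengths (X ++ Y)) :
    m ≤ X.length := by
  obtain ⟨s, hs, hsd, rfl⟩ := hm
  obtain ⟨s₁, s₂, rfl, h₁, h₂⟩ := sublist_append_iff.1 hs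
  cases s₂ with
  | nil => simpa using h₁.length_le
  | cons x t =>
    -- `s₁` lies above `x`, and `x :: t` below it
    obtain ⟨-, hxt, hs₁x⟩ := pairwise_append.1 hsd
    have hlow : (x :: t).length ≤ X.countP (fun a => decide (a ≤ x)) := by
      have : (x :: t).countP (fun a => decide (a ≤ x)) = (x :: t).length :=
        countP_eq_length.2 fun a ha => by
          rcases mem_cons.1 ha with rfl | ha
          · simp
          · simpa using ((pairwise_cons.1 hxt).1 a ha).le
      exact this ▸ h₂.countP_le.trans (h _ (antitone_decide_le x))
    have hhigh : s₁.length ≤ X.countP (fun a => ¬ decide (a ≤ x)) := by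
      have : s₁.countP (fun a => ¬ decide (a ≤ x)) = s₁.length :=
        countP_eq_length.2 fun a ha => by simpa using hs₁x a ha x mem_cons_self
      exact this ▸ h₁.countP_le
    have := length_eq_countP_add_countP (fun a => decide (a ≤ x)) (l := X)
    rw [length_append]
    omega

lemma CountDominates.isGreatest_decSublistLengths_filter_append {X Y : List α}
    (hX : X.Pairwise (· > ·)) (h : CountDominates X Y) {p : α → Bool} (hp : Antitone p) :
    IsGreatest (decSublistLengths ((X ++ Y).filter p)) (X.countP p) := by
  rw [countP_eq_length_filter, filter_append]
  exact ⟨decSublistLengths_mono (sublist_append_left _ _)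
      (length_mem_decSublistLengths (hX.filter p)),
    fun _ => (h.filter hp).le_length_of_mem_decSublistLengths_append⟩

end DecreasingSublists

section Plactic

variable {n : ℕ}

lemma KnuthStep.decSublistLengths_eq {u v : Word n} (h : KnuthStep n u v) :
    decSublistLengths u = decSublistLengths v := by
  cases h with
  | left u v x y z hxy hyz =>
    simp only [append_assoc, cons_append, nil_append]
    exact (decSublistLengths_subset_of_swap (hxy.trans_lt hyz)).antisymm
      (decSublistLengths_append_subset fun _ => exists_decreasing_sublist_of_knuth_left hxy hyz)
  | right u v x y z hxy hyz =>
    have hfwd := decSublistLengths_subset_of_swap (p := u ++ [y]) (q := v) (hxy.trans_le hyz)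
    simp only [append_assoc, cons_append, nil_append] at hfwd ⊢
    exact hfwd.antisymm
      (decSublistLengths_append_subset fun _ => exists_decreasing_sublist_of_knuth_right hxy hyz)

lemma KnuthStep.filter {u v : Word n} (h : KnuthStep n u v) {p : Fin n → Bool}
    (hp : Antitone p) : u.filter p = v.filter p ∨ KnuthStep n (u.filter p) (v.filter p) := by
  cases h with
  | left u v x y z hxy hyz =>
    cases hz : p z
    · left
      simp [filter_cons, hz]
    · right
      have hx := Bool.le_iff_imp.1 (hp (hxy.trans hyz.le)) hz
      have hy := Bool.le_iff_imp.1 (hp hyz.le) hz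
      simpa [hx, hy, hz] using KnuthStep.left _ _ x y z hxy hyz
  | right u v x y z hxy hyz =>
    cases hz : p z
    · left
      simp [filter_cons, hz]
    · right
      have hx := Bool.le_iff_imp.1 (hp (hxy.trans_le hyz).le) hz
      have hy := Bool.le_iff_imp.1 (hp hyz) hz
      simpa [hx, hy, hz] using KnuthStep.right _ _ x y z hxy hyz

lemma PlacticEq.decSublistLengths_filter_eq {u v : Word n} (h : PlacticEq n u v)
    {p : Fin n → Bool} (hp : Antitone p) :
    decSublistLengths (u.filter p) = decSublistLengths (v.filter p) := by
  induction h with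
  | rel _ _ h =>
    rcases h.filter hp with h | h
    · rw [h]
    · exact h.decSublistLengths_eq
  | refl => rfl
  | symm _ _ _ ih => exact ih.symm
  | trans _ _ _ _ _ ih₁ ih₂ => exact ih₁.trans ih₂

lemma PlacticEq.perm {u v : Word n} (h : PlacticEq n u v) : u.Perm v := by
  induction h with
  | rel _ _ h =>
    cases h with
    | left u v x y z => exact ((Perm.swap z x [y]).append_left u).append_right v
    | right u v x y z => exact (((Perm.swap z x []).cons y).append_left u).append_right v
  | refl => rfl
  | symm _ _ _ ih => exact ih.symm
  | trans _ _ _ _ _ ih₁ ih₂ => exact ih₁.trans ih₂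

lemma IsColumn.pairwise {w : Word n} (h : IsColumn w) : w.Pairwise (· > ·) :=
  isChain_iff_pairwise.1 h.2

lemma colGE_iff_countDominates {X Y : Word n} (hX : IsColumn X) (hY : IsColumn Y) :
    ColGE X Y ↔ CountDominates X Y := by
  have sorted {w : Word n} (hw : IsColumn w) : w.reverse.Pairwise (· ≤ ·) :=
    pairwise_reverse.2 (hw.pairwise.imp le_of_lt)
  constructor
  · rintro ⟨hlen, hle⟩ p hp
    by_contra! hlt
    set i := X.countP p
    have hiY : i < Y.reverse.length := by simpa using hlt.trans_le countP_le_length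
    have hiX : i < X.reverse.length := by simpa using (length_reverse ▸ hiY).trans_le hlen
    have hpY : p Y.reverse[i] = true :=
      (lt_countP_iff_of_pairwise_le hp (sorted hY) hiY).1 (by rwa [countP_reverse])
    have hXY : X.reverse[i] ≤ Y.reverse[i] :=
      hle i _ _ (getElem?_eq_getElem hiX) (getElem?_eq_getElem hiY)
    have := (lt_countP_iff_of_pairwise_le hp (sorted hX) hiX).2
      (Bool.le_iff_imp.1 (hp hXY) hpY)
    rw [countP_reverse] at this
    exact lt_irrefl i this
  · intro h
    refine ⟨by simpa using h (fun _ => true) antitone_const, fun i a b ha hb => ?_⟩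
    obtain ⟨hiX, rfl⟩ := List.getElem?_eq_some_iff.1 ha
    obtain ⟨hiY, rfl⟩ := List.getElem?_eq_some_iff.1 hb
    have hp := antitone_decide_le Y.reverse[i]
    have hY' := (lt_countP_iff_of_pairwise_le hp (sorted hY) hiY).2 (by simp)
    rw [countP_reverse] at hY'
    have hX' : i < X.reverse.countP _ := countP_reverse ▸ hY'.trans_le (h _ hp)
    simpa using (lt_countP_iff_of_pairwise_le hp (sorted hX) hiX).1 hX'

lemma TwoColP.isGreatest_decSublistLengths_filter {u X Y : Word n} (h : TwoColP n u X Y)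
    {p : Fin n → Bool} (hp : Antitone p) :
    IsGreatest (decSublistLengths (u.filter p)) (X.countP p) := by
  obtain ⟨hX, hY, hXY, heq⟩ := h
  rw [heq.decSublistLengths_filter_eq hp]
  exact ((colGE_iff_countDominates hX hY).1 hXY).isGreatest_decSublistLengths_filter_append
    hX.pairwise hp

lemma SingleColP.isGreatest_decSublistLengths_filter {u X : Word n} (h : SingleColP n u X)
    {p : Fin n → Bool} (hp : Antitone p) :
    IsGreatest (decSublistLengths (u.filter p)) (X.countP p) := by
  obtain ⟨hX, heq⟩ := h
  rw [heq.decSublistLengths_filter_eq hp, countP_eq_length_filter]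
  exact isGreatest_decSublistLengths_of_pairwise (hX.pairwise.filter p)

lemma TwoColP.exists_eq_singleton_mem {g : Fin n} {A A' E : Word n} (hA : IsColumn A)
    (h : TwoColP n (g :: A) A' E) : ∃ b ∈ A, E = [b] := by
  have hmax {p : Fin n → Bool} (hp : Antitone p) :=
    (h.isGreatest_decSublistLengths_filter hp).unique
      (isGreatest_decSublistLengths_filter_cons hA.pairwise g p)
  have hcount (p : Fin n → Bool) :
      A'.countP p + E.countP p = A.countP p + if p g then 1 else 0 := by
    rw [← countP_append, ← h.2.2.2.perm.countP_eq, countP_cons]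
  obtain ⟨b, rfl⟩ : ∃ b, E = [b] := by
    have h₁ := hmax (p := fun _ => true) antitone_const
    have h₂ := hcount (fun _ => true)
    have hE := length_pos_iff.2 h.2.1.1
    simp only [countP_true] at h₁ h₂
    apply length_eq_one_iff.1
    split_ifs at h₁ h₂ <;> omega
  refine ⟨b, ?_, rfl⟩
  have hle := hmax (antitone_decide_le b)
  have cle := hcount fun a => decide (a ≤ b)
  have hlt := hmax (antitone_decide_lt b)
  have clt := hcount fun a => decide (a < b)
  simp only [countP_cons, countP_nil, decide_eq_true_eq, zero_add] at hle cle hlt clt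
  -- `(· ≤ b)` forces `g ≤ b` and a letter of `A` in `[g, b]`; `(· < b)` forbids one in `[g, b)`
  by_contra hb
  split_ifs at hle cle hlt clt <;> grind

lemma colGE_of_bump {g b : Fin n} {A B A' B' : Word n} (hA : IsColumn A) (hB : IsColumn B)
    (hAB : ColGE A B) (hA' : IsColumn A') (hB' : IsColumn B') (hbA : b ∈ A)
    (hgA : ∀ p, Antitone p → IsGreatest (decSublistLengths ((g :: A).filter p)) (A'.countP p))
    (hbB : ∀ p, Antitone p → IsGreatest (decSublistLengths ((b :: B).filter p)) (B'.countP p)) :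
    ColGE A' B' := by
  rw [colGE_iff_countDominates hA hB] at hAB
  rw [colGE_iff_countDominates hA' hB']
  intro p hp
  have hAA' : A.countP p ≤ A'.countP p := by
    rw [countP_eq_length_filter]
    exact (hgA p hp).2 (decSublistLengths_mono ((sublist_cons_self g A).filter p)
      (length_mem_decSublistLengths (hA.pairwise.filter p)))
  rw [(hbB p hp).unique (isGreatest_decSublistLengths_filter_cons hB.pairwise b p)]
  split_ifs with hc
  · obtain ⟨hpb, hBb⟩ := hc
    have hB_eq : B.countP p = B.countP (fun a => p a && decide (a < b)) :=
      countP_congr fun a ha => by simpa using fun hpa => hBb a ha hpa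
    have hA_lt : A.countP (fun a => p a && decide (a < b)) < A.countP p := by
      have hperm := perm_cons_erase hbA
      rw [hperm.countP_eq, hperm.countP_eq, countP_cons, countP_cons]
      simpa [hpb] using countP_mono_left fun a _ h => (Bool.and_eq_true _ _ ▸ h).1
    have := hAB _ (hp.and (antitone_decide_lt b))
    omega
  · exact (hAB p hp).trans hAA'

lemma colGE_of_perm_cons {g : Fin n} {A B A' : Word n} (hA : IsColumn A) (hB : IsColumn B)
    (hA' : IsColumn A') (hperm : (g :: A).Perm A') (hAB : ColGE A B) : ColGE A' B := by
  rw [colGE_iff_countDominates hA hB] at hAB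
  rw [colGE_iff_countDominates hA' hB]
  intro p hp
  rw [← hperm.countP_eq, countP_cons]
  exact (hAB p hp).trans (Nat.le_add_right _ _)

end Plactic

/-- Let `γ ∈ A` (identified with the length-one column `γ`,
so that `c_γ ∈ C`) and let `α, β` be columns over `A` with `α ⪰ β`.
(1) If `c_γ c_α c_β → c_{α'} c_η c_β → c_{α'} c_{β'} c_ζ` is a sequence of two
applications of rules of `T` (the first applied to `c_γ c_α`, the second to
`c_η c_β`), then `α' ⪰ β'`.
(2) If `c_γ c_α c_β → c_{α'} c_η c_β → c_{α'} c_{β'}` is such a sequence, then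
`α' ⪰ β'`.
(3) If `c_γ c_α c_β → c_{α'} c_β` is a single application of a rule of `T` to
`c_γ c_α`, then `α' ⪰ β`. -/
theorem statement13 {n : ℕ} (g : Fin n) (cγ cα cβ : CLetter n)
    (hγ : cγ.1 = [g]) (hab : ColGE cα.1 cβ.1) :
    (∀ cα' cη cβ' cζ : CLetter n,
      TRule n [cγ, cα] [cα', cη] → TRule n [cη, cβ] [cβ', cζ] →
      ColGE cα'.1 cβ'.1) ∧
    (∀ cα' cη cβ' : CLetter n,
      TRule n [cγ, cα] [cα', cη] → TRule n [cη, cβ] [cβ'] →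
      ColGE cα'.1 cβ'.1) ∧
    (∀ cα' : CLetter n, TRule n [cγ, cα] [cα'] → ColGE cα'.1 cβ.1) := by
  refine ⟨fun cα' cη cβ' cζ h₁ h₂ => ?_, fun cα' cη cβ' h₁ h₂ => ?_, fun cα' h => ?_⟩
  · rcases h₁ with _ | ⟨_, _, _, _, _, hP₁⟩
    rcases h₂ with _ | ⟨_, _, _, _, _, hP₂⟩
    rw [hγ] at hP₁
    obtain ⟨b, hb, hη⟩ := hP₁.exists_eq_singleton_mem cα.2
    rw [hη] at hP₂
    exact colGE_of_bump cα.2 cβ.2 hab cα'.2 cβ'.2 hb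
      (fun _ => hP₁.isGreatest_decSublistLengths_filter)
      (fun _ => hP₂.isGreatest_decSublistLengths_filter)
  · rcases h₁ with _ | ⟨_, _, _, _, _, hP₁⟩
    rcases h₂ with ⟨_, _, _, _, hP₂⟩ | _
    rw [hγ] at hP₁
    obtain ⟨b, hb, hη⟩ := hP₁.exists_eq_singleton_mem cα.2
    rw [hη] at hP₂
    exact colGE_of_bump cα.2 cβ.2 hab cα'.2 cβ'.2 hb
      (fun _ => hP₁.isGreatest_decSublistLengths_filter)
      (fun _ => hP₂.isGreatest_decSublistLengths_filter)
  · rcases h with ⟨_, _, _, _, hP⟩ | _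
    rw [hγ] at hP
    exact colGE_of_perm_cons cα.2 cβ.2 cα'.2 hP.2.perm hab
end

section
/- L is a regular language over A, and every element of the Plactic monoid M_n has at least one representative in L. -/
/-- The language `L ⊆ A*` of column readings of tableaux: concatenations of
columns `α⁽¹⁾ ⋯ α⁽ᵏ⁾` (`k ≥ 0`) with `α⁽ʲ⁾ ⪰ α⁽ʲ⁺¹⁾` for all `j`. -/
def LangL (n : ℕ) : Language (Fin n) :=
  {w : Word n | ∃ cols : List (Word n),
    (∀ c ∈ cols, IsColumn c) ∧ cols.Chain' ColGE ∧ w = cols.flatten}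

/-!
A word factors uniquely into maximal strictly decreasing factors, and a `⪰`-chain of columns
is necessarily this factorisation, because consecutive columns of a tableau meet at a weak
ascent. So `w ∈ L` iff consecutive maximal factors are `⪰`-related. Reading `w` from right to
left it suffices to remember the two leftmost factors, each of length at most `n`; hence the
reversed language has finitely many left quotients.

Every element of `M_n` is represented in `L` by column insertion: inserting a letter from the
left into the column reading of a tableau is realised by Knuth relations and keeps the columns
`⪰`-ordered, so inserting the letters of `w` one at a time produces a word of `L` equivalent
to `w`.
-/

theorem Language.isRegular_of_cons_step {α σ : Type*} {L : Language α} (f : List α → σ)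
    (step : α → σ → σ) (accept : Set σ) (hfin : (Set.range f).Finite)
    (hstep : ∀ a w, f (a :: w) = step a (f w)) (hL : ∀ w, w ∈ L ↔ f w ∈ accept) :
    L.IsRegular := by
  have happend (x y : List α) : f (x ++ y) = x.foldr step (f y) := by
    induction x with
    | nil => rfl
    | cons a x ih => rw [List.cons_append, hstep, ih, List.foldr_cons]
  -- The left quotient of `L.reverse` by `x` depends only on `f x.reverse`.
  refine .of_reverse (.of_finite_range_leftQuotient ?_)
  refine (hfin.image fun q => {y : List α | y.reverse.foldr step q ∈ accept}).subset ?_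
  rintro _ ⟨x, rfl⟩
  refine ⟨f x.reverse, ⟨_, rfl⟩, Set.ext fun y => ?_⟩
  change _ ↔ x ++ y ∈ L.reverse
  rw [Language.mem_reverse, hL, List.reverse_append, happend]
  rfl

section Knuth

variable {n : ℕ}

lemma KnuthStep.append_left {u v : Word n} (p : Word n) (h : KnuthStep n u v) :
    KnuthStep n (p ++ u) (p ++ v) := by
  cases h with
  | left u v x y z h1 h2 => simpa using KnuthStep.left (p ++ u) v x y z h1 h2
  | right u v x y z h1 h2 => simpa using KnuthStep.right (p ++ u) v x y z h1 h2

lemma KnuthStep.append_right {u v : Word n} (q : Word n) (h : KnuthStep n u v) :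
    KnuthStep n (u ++ q) (v ++ q) := by
  cases h with
  | left u v x y z h1 h2 => simpa using KnuthStep.left u (v ++ q) x y z h1 h2
  | right u v x y z h1 h2 => simpa using KnuthStep.right u (v ++ q) x y z h1 h2

lemma PlacticEq.refl (u : Word n) : PlacticEq n u u := Relation.EqvGen.refl u

lemma PlacticEq.symm {u v : Word n} (h : PlacticEq n u v) : PlacticEq n v u :=
  Relation.EqvGen.symm u v h

lemma PlacticEq.trans {u v w : Word n} (h₁ : PlacticEq n u v) (h₂ : PlacticEq n v w) :
    PlacticEq n u w :=
  Relation.EqvGen.trans u v w h₁ h₂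

instance : Trans (PlacticEq n) (PlacticEq n) (PlacticEq n) := ⟨PlacticEq.trans⟩

lemma PlacticEq.of_knuthStep {u v : Word n} (h : KnuthStep n u v) : PlacticEq n u v :=
  Relation.EqvGen.rel u v h

lemma PlacticEq.map {f : Word n → Word n} (hf : ∀ u v, KnuthStep n u v → KnuthStep n (f u) (f v))
    {u v : Word n} (h : PlacticEq n u v) : PlacticEq n (f u) (f v) := by
  induction h with
  | rel u v h => exact .of_knuthStep (hf u v h)
  | refl u => exact .refl _
  | symm u v _ ih => exact ih.symm
  | trans u v w _ _ ih₁ ih₂ => exact ih₁.trans ih₂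

lemma PlacticEq.append {u u' v v' : Word n} (hu : PlacticEq n u u') (hv : PlacticEq n v v') :
    PlacticEq n (u ++ v) (u' ++ v') :=
  (hu.map (f := (· ++ v)) fun _ _ => .append_right v).trans
    (hv.map (f := (u' ++ ·)) fun _ _ => .append_left u')

lemma placticEq_cons_slide {x a : Fin n} {D : Word n} (hD : (D ++ [a]).Pairwise (· > ·))
    (hxa : x ≤ a) : PlacticEq n (x :: (D ++ [a])) (D ++ [x, a]) := by
  induction D with
  | nil => exact .refl _
  | cons z D ih =>
    rw [List.cons_append, List.pairwise_cons] at hD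
    obtain ⟨y, r, hyr⟩ := List.exists_cons_of_ne_nil (List.append_ne_nil_of_right_ne_nil D
      (List.cons_ne_nil a []))
    have hy : y ∈ D ++ [a] := hyr ▸ List.mem_cons_self
    have hxy : x ≤ y := by
      rcases List.mem_append.mp hy with hy | hy
      · exact hxa.trans ((List.pairwise_append.mp hD.2).2.2 y hy a List.mem_cons_self).le
      · exact hxa.trans (List.mem_singleton.mp hy).ge
    have step : KnuthStep n (x :: z :: (D ++ [a])) (z :: x :: (D ++ [a])) := by
      simpa [hyr] using KnuthStep.left [] r x y z hxy (hD.1 y hy)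
    exact (PlacticEq.of_knuthStep step).trans
      ((ih hD.2).map (f := (z :: ·)) fun _ _ => .append_left [z])

end Knuth

section Columns

variable {n : ℕ}

lemma IsColumn.pairwise_s14 {c : Word n} (hc : IsColumn c) : c.Pairwise (· > ·) :=
  List.isChain_iff_pairwise.mp hc.2

lemma IsColumn.length_le_s14 {c : Word n} (hc : IsColumn c) : c.length ≤ n := by
  simpa using List.Nodup.length_le_card (hc.pairwise_s14.imp ne_of_gt)

@[simp] lemma colGE_nil (c : Word n) : ColGE c [] := by simp [ColGE]

lemma getLast_le_head_of_colGE {c d : Word n} (hd : IsColumn d) (h : ColGE c d) :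
    ∃ hc : c ≠ [], c.getLast hc ≤ d.head hd.1 := by
  have hc : c ≠ [] := by
    rintro rfl
    exact hd.1 (List.eq_nil_of_length_eq_zero (Nat.le_zero.mp h.1))
  have last_eq {l : Word n} (hl : l ≠ []) : l.reverse[0]? = some (l.getLast hl) := by
    rw [← List.head?_eq_getElem?, List.head?_reverse, List.getLast?_eq_some_getLast hl]
  refine ⟨hc, (h.2 0 _ _ (last_eq hc) (last_eq hd.1)).trans ?_⟩
  obtain ⟨b, t, rfl⟩ := List.exists_cons_of_ne_nil hd.1
  rcases List.mem_cons.mp (List.getLast_mem hd.1) with h | h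
  · exact h.le
  · exact ((List.pairwise_cons.mp hd.pairwise_s14).1 _ h).le

def colRuns (w : Word n) : List (Word n) := w.splitBy fun a b => decide (b < a)

lemma isColumn_of_mem_colRuns {w c : Word n} (h : c ∈ colRuns w) : IsColumn c :=
  ⟨List.ne_nil_of_mem_splitBy h,
    (List.isChain_of_mem_splitBy h).imp fun _ _ => of_decide_eq_true⟩

lemma colRuns_flatten {cols : List (Word n)} (hcol : ∀ c ∈ cols, IsColumn c)
    (hchain : cols.IsChain ColGE) : colRuns cols.flatten = cols := by
  refine List.splitBy_flatten (fun h => (hcol [] h).1 rfl)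
    (fun c hc => (hcol c hc).2.imp fun _ _ => decide_eq_true)
    (hchain.imp_of_mem_imp fun c d _ hd hcd => ?_)
  obtain ⟨hc, hle⟩ := getLast_le_head_of_colGE (hcol d hd) hcd
  exact ⟨hc, (hcol d hd).1, by simpa using hle⟩

lemma mem_LangL_iff_isChain_colRuns {w : Word n} : w ∈ LangL n ↔ (colRuns w).IsChain ColGE := by
  constructor
  · rintro ⟨cols, hcol, hchain, rfl⟩
    rwa [colRuns_flatten hcol hchain]
  · exact fun h => ⟨colRuns w, fun c => isColumn_of_mem_colRuns, h,
      (List.flatten_splitBy _ _).symm⟩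

def consRuns (a : Fin n) : List (Word n) → List (Word n)
  | [] => [[a]]
  | c :: cs => if ∀ b ∈ c.head?, b < a then (a :: c) :: cs else [a] :: c :: cs

lemma colRuns_cons (a : Fin n) (w : Word n) : colRuns (a :: w) = consRuns a (colRuns w) := by
  obtain ⟨hw, hnil, hcol, hbd⟩ := List.splitBy_eq_iff.mp (rfl : colRuns w = _)
  rw [colRuns, List.splitBy_eq_iff]
  rcases hR : colRuns w with _ | ⟨c, cs⟩
  · simp_all [consRuns]
  rw [hR] at hw hnil hcol hbd
  obtain ⟨b, c, rfl⟩ := List.exists_cons_of_ne_nil (fun h => hnil (h ▸ List.mem_cons_self))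
  by_cases hba : b < a
  · rw [consRuns, if_pos (by simpa using hba)]
    refine ⟨by simp [hw], by simpa using hnil, ?_, ?_⟩
    · simp_all
    · rcases cs with _ | ⟨d, ds⟩
      · simp
      rw [List.isChain_cons_cons] at hbd ⊢
      obtain ⟨⟨_, hd, hle⟩, hbd⟩ := hbd
      exact ⟨⟨List.cons_ne_nil _ _, hd, by simpa using hle⟩, hbd⟩
  · rw [consRuns, if_neg (by simpa using hba)]
    refine ⟨by simp [hw], by simpa using hnil, by simp_all, ?_⟩
    exact List.isChain_cons_cons.mpr
      ⟨⟨List.cons_ne_nil _ _, List.cons_ne_nil _ _, decide_eq_false hba⟩, hbd⟩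

-- The state of a word records its two leftmost maximal columns (`[]` when there is none), or is
-- `none` once the columns to their right are known not to form a `⪰`-chain.
open Classical in
noncomputable def runsState : List (Word n) → Option (Word n × Word n)
  | [] => some ([], [])
  | [c] => some (c, [])
  | c :: d :: ds => if (d :: ds).IsChain ColGE then some (c, d) else none

open Classical in
noncomputable def runsStep (a : Fin n) : Option (Word n × Word n) → Option (Word n × Word n)
  | none => none
  | some (c, d) =>
    if ∀ b ∈ c.head?, b < a then some (a :: c, d) else if ColGE c d then some ([a], c) else none

def runsAccept : Set (Option (Word n × Word n)) := {s | ∃ p ∈ s, ColGE p.1 p.2}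

lemma runsState_consRuns (a : Fin n) (cs : List (Word n)) :
    runsState (consRuns a cs) = runsStep a (runsState cs) := by
  rcases cs with _ | ⟨c, _ | ⟨d, ds⟩⟩ <;> simp only [consRuns, runsState, runsStep]
  · simp
  · split_ifs <;> simp_all
  · by_cases hext : ∀ b ∈ c.head?, b < a
    · simp only [if_pos hext]
      split_ifs <;> simp only [if_pos hext]
    · simp only [if_neg hext, List.isChain_cons_cons]
      split_ifs <;> simp_all

lemma isChain_colGE_iff_mem_runsAccept (cs : List (Word n)) :
    cs.IsChain ColGE ↔ runsState cs ∈ runsAccept := by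
  rcases cs with _ | ⟨c, _ | ⟨d, ds⟩⟩ <;> simp only [runsState, runsAccept]
  · simp
  · simp
  · split_ifs <;> simp_all

lemma length_le_of_mem_runsState {cs : List (Word n)} (hcs : ∀ c ∈ cs, c.length ≤ n)
    {p : Word n × Word n} (hp : p ∈ runsState cs) : p.1.length ≤ n ∧ p.2.length ≤ n := by
  rcases cs with _ | ⟨c, _ | ⟨d, ds⟩⟩ <;> simp only [runsState] at hp
  · cases hp; simp
  · cases hp; simpa using hcs
  · split_ifs at hp
    · cases hp; simp_all
    · cases hp

end Columns

theorem isRegular_LangL (n : ℕ) : (LangL n).IsRegular := by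
  refine Language.isRegular_of_cons_step (fun w => runsState (colRuns w)) runsStep runsAccept ?_
    (fun a w => by rw [colRuns_cons, runsState_consRuns])
    (fun w => mem_LangL_iff_isChain_colRuns.trans (isChain_colGE_iff_mem_runsAccept _))
  refine ((((List.finite_length_le _ n).prod (List.finite_length_le _ n)).image some).insert
    none).subset ?_
  rintro _ ⟨w, rfl⟩
  dsimp only
  cases h : runsState (colRuns w) with
  | none => exact Set.mem_insert _ _
  | some p =>
    exact Set.mem_insert_of_mem _ ⟨p, length_le_of_mem_runsState
      (fun c hc => (isColumn_of_mem_colRuns hc).length_le_s14) h, rfl⟩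

section Insertion

variable {n : ℕ}

-- During insertion a column is stored bottom-to-top, as an increasing word, so that `⪰`
-- compares columns from their heads and a letter placed on top is appended.
def ColGEUp (k l : Word n) : Prop := ColGE k.reverse l.reverse

@[simp] lemma colGEUp_nil_right (k : Word n) : ColGEUp k [] := by simp [ColGEUp]

@[simp] lemma not_colGEUp_nil_cons (b : Fin n) (l : Word n) : ¬ ColGEUp [] (b :: l) := by
  simp [ColGEUp, ColGE]

@[simp] lemma colGEUp_cons_cons {a b : Fin n} {k l : Word n} :
    ColGEUp (a :: k) (b :: l) ↔ a ≤ b ∧ ColGEUp k l := by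
  simp only [ColGEUp, ColGE, List.reverse_reverse, List.length_reverse, List.length_cons,
    Nat.add_le_add_iff_right]
  constructor
  · rintro ⟨hlen, h⟩
    exact ⟨h 0 a b rfl rfl, hlen, fun i => h (i + 1)⟩
  · rintro ⟨hab, hlen, h⟩
    refine ⟨hlen, fun i x y hx hy => ?_⟩
    cases i with
    | zero => cases hx; cases hy; exact hab
    | succ i => exact h i x y hx hy

def colInsert (x : Fin n) : Word n → Word n × Option (Fin n)
  | [] => ([x], none)
  | a :: t => if x ≤ a then (x :: t, some a) else (a :: (colInsert x t).1, (colInsert x t).2)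

@[simp] lemma colInsert_nil (x : Fin n) : colInsert x [] = ([x], none) := rfl

lemma colInsert_cons_of_le {x a : Fin n} (t : Word n) (h : x ≤ a) :
    colInsert x (a :: t) = (x :: t, some a) :=
  if_pos h

lemma colInsert_cons_of_lt {x a : Fin n} (t : Word n) (h : a < x) :
    colInsert x (a :: t) = (a :: (colInsert x t).1, (colInsert x t).2) :=
  if_neg (not_le.mpr h)

lemma colInsert_ne_nil (x : Fin n) (c : Word n) : (colInsert x c).1 ≠ [] := by
  rcases c with _ | ⟨a, t⟩
  · simp
  rcases le_or_gt x a with h | h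
  · simp [colInsert_cons_of_le t h]
  · simp [colInsert_cons_of_lt t h]

lemma mem_colInsert {x y : Fin n} {c : Word n} (hy : y ∈ (colInsert x c).1) : y = x ∨ y ∈ c := by
  induction c with
  | nil => simpa using hy
  | cons a t ih =>
    rcases le_or_gt x a with h | h
    · rw [colInsert_cons_of_le t h] at hy
      rcases List.mem_cons.mp hy with hy | hy <;> simp [hy]
    · rw [colInsert_cons_of_lt t h] at hy
      rcases List.mem_cons.mp hy with hy | hy
      · simp [hy]
      · rcases ih hy with hy | hy <;> simp [hy]

lemma head_colInsert_le (x : Fin n) (c : Word n) : ∀ y ∈ (colInsert x c).1.head?, y ≤ x := by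
  rcases c with _ | ⟨a, t⟩
  · simp
  rcases le_or_gt x a with h | h
  · simp [colInsert_cons_of_le t h]
  · simpa [colInsert_cons_of_lt t h] using h.le

lemma le_of_colInsert_eq_some {x o : Fin n} {c : Word n} (ho : (colInsert x c).2 = some o) :
    x ≤ o := by
  induction c with
  | nil => simp at ho
  | cons a t ih =>
    rcases le_or_gt x a with h | h
    · rw [colInsert_cons_of_le t h, Option.some_inj] at ho
      exact ho ▸ h
    · rw [colInsert_cons_of_lt t h] at ho
      exact ih ho

lemma pairwise_colInsert (x : Fin n) {c : Word n} (hc : c.Pairwise (· < ·)) :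
    (colInsert x c).1.Pairwise (· < ·) := by
  induction c with
  | nil => simp
  | cons a t ih =>
    rw [List.pairwise_cons] at hc
    rcases le_or_gt x a with h | h
    · rw [colInsert_cons_of_le t h]
      exact List.pairwise_cons.mpr ⟨fun y hy => h.trans_lt (hc.1 y hy), hc.2⟩
    · rw [colInsert_cons_of_lt t h]
      refine List.pairwise_cons.mpr ⟨fun y hy => ?_, ih hc.2⟩
      rcases mem_colInsert hy with rfl | hy
      exacts [h, hc.1 y hy]

lemma placticEq_colInsert (x : Fin n) {c : Word n} (hc : c.Pairwise (· < ·)) :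
    PlacticEq n (x :: c.reverse) ((colInsert x c).1.reverse ++ (colInsert x c).2.toList) := by
  induction c with
  | nil => exact .refl _
  | cons a t ih =>
    rcases le_or_gt x a with hxa | hax
    · have hD : (t.reverse ++ [a]).Pairwise (· > ·) := by
        rw [← List.reverse_cons, List.pairwise_reverse]
        exact hc
      simpa [colInsert_cons_of_le t hxa] using placticEq_cons_slide hD hxa
    rw [colInsert_cons_of_lt t hax]
    rw [List.pairwise_cons] at hc
    obtain ⟨y, t', ht'⟩ := List.exists_cons_of_ne_nil (colInsert_ne_nil x t)
    have hay : a < y := by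
      rcases mem_colInsert (ht' ▸ List.mem_cons_self : y ∈ (colInsert x t).1) with rfl | hy
      exacts [hax, hc.1 y hy]
    have hyx : y ≤ x := head_colInsert_le x t y (by simp [ht'])
    -- The bumped letter `o` passes `a` by `y a o ≡ y o a`, where `y ≤ x ≤ o` is the lowest
    -- letter of the new column.
    have hbump : PlacticEq n ((colInsert x t).1.reverse ++ ((colInsert x t).2.toList ++ [a]))
        ((colInsert x t).1.reverse ++ ([a] ++ (colInsert x t).2.toList)) := by
      cases ho : (colInsert x t).2 with
      | none => exact .refl _
      | some o =>
        refine (PlacticEq.of_knuthStep ?_).symm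
        simpa [ht'] using KnuthStep.right t'.reverse [] a y o hay
          (hyx.trans (le_of_colInsert_eq_some ho))
    calc x :: (a :: t).reverse = (x :: t.reverse) ++ [a] := by simp
      PlacticEq n _ (((colInsert x t).1.reverse ++ (colInsert x t).2.toList) ++ [a]) :=
        (ih hc.2).append (.refl _)
      PlacticEq n _ ((a :: (colInsert x t).1).reverse ++ (colInsert x t).2.toList) := by
        simpa using hbump

lemma colGEUp_colInsert (x : Fin n) {c d : Word n} (h : ColGEUp c d) :
    ColGEUp (colInsert x c).1 d := by
  induction c generalizing d with
  | nil => cases d <;> simp_all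
  | cons a t ih =>
    rcases d with _ | ⟨b, l⟩
    · simp
    rw [colGEUp_cons_cons] at h
    rcases le_or_gt x a with hxa | hax
    · simpa [colInsert_cons_of_le t hxa] using ⟨hxa.trans h.1, h.2⟩
    · simpa [colInsert_cons_of_lt t hax] using ⟨h.1, ih h.2⟩

lemma colGEUp_colInsert_colInsert {x o : Fin n} {c d : Word n} (h : ColGEUp c d)
    (ho : (colInsert x c).2 = some o) : ColGEUp (colInsert x c).1 (colInsert o d).1 := by
  induction c generalizing d with
  | nil => simp at ho
  | cons a t ih =>
    have hxo := le_of_colInsert_eq_some ho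
    rcases le_or_gt x a with hxa | hax
    · rw [colInsert_cons_of_le t hxa, Option.some_inj] at ho
      rw [colInsert_cons_of_le t hxa]
      subst ho
      rcases d with _ | ⟨b, l⟩
      · simpa using hxa
      · rw [colGEUp_cons_cons] at h
        simpa [colInsert_cons_of_le l h.1] using ⟨hxa, h.2⟩
    · rw [colInsert_cons_of_lt t hax] at ho ⊢
      have hao : a ≤ o := hax.le.trans hxo
      rcases d with _ | ⟨b, l⟩
      · simpa using hao
      rw [colGEUp_cons_cons] at h
      rcases le_or_gt o b with hob | hbo
      · simpa [colInsert_cons_of_le l hob] using ⟨hao, colGEUp_colInsert x h.2⟩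
      · simpa [colInsert_cons_of_lt l hbo] using ⟨h.1, ih h.2 ho⟩

def IsTableauUp (cs : List (Word n)) : Prop :=
  (∀ c ∈ cs, c ≠ [] ∧ c.Pairwise (· < ·)) ∧ cs.IsChain ColGEUp

lemma isTableauUp_cons_iff {c : Word n} {cs : List (Word n)} :
    IsTableauUp (c :: cs) ↔
      (c ≠ [] ∧ c.Pairwise (· < ·)) ∧ (∀ d ∈ cs.head?, ColGEUp c d) ∧ IsTableauUp cs := by
  simp only [IsTableauUp, List.mem_cons, forall_eq_or_imp, List.isChain_cons]
  tauto

def columnReading (cs : List (Word n)) : Word n := (cs.map List.reverse).flatten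

lemma columnReading_mem_LangL {cs : List (Word n)} (h : IsTableauUp cs) :
    columnReading cs ∈ LangL n := by
  refine ⟨cs.map List.reverse, ?_, (List.isChain_map _).mpr h.2, rfl⟩
  simp only [List.mem_map, forall_exists_index, and_imp, forall_apply_eq_imp_iff₂]
  intro c hc
  refine ⟨by simpa using (h.1 c hc).1, ?_⟩
  exact List.isChain_reverse.mpr (List.isChain_iff_pairwise.mpr (h.1 c hc).2)

def tabInsert (x : Fin n) : List (Word n) → List (Word n)
  | [] => [[x]]
  | c :: cs => (colInsert x c).1 :: (colInsert x c).2.elim cs (tabInsert · cs)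

lemma head?_tabInsert (x : Fin n) (cs : List (Word n)) :
    (tabInsert x cs).head? = some (colInsert x (cs.headD [])).1 := by
  cases cs <;> rfl

lemma isTableauUp_tabInsert (x : Fin n) {cs : List (Word n)} (h : IsTableauUp cs) :
    IsTableauUp (tabInsert x cs) := by
  induction cs generalizing x with
  | nil => simp [tabInsert, IsTableauUp]
  | cons c cs ih =>
    obtain ⟨hc, hhead, hcs⟩ := isTableauUp_cons_iff.mp h
    have hc' : (colInsert x c).1 ≠ [] ∧ (colInsert x c).1.Pairwise (· < ·) :=
      ⟨colInsert_ne_nil x c, pairwise_colInsert x hc.2⟩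
    rw [tabInsert]
    cases ho : (colInsert x c).2 with
    | none =>
      exact isTableauUp_cons_iff.mpr ⟨hc', fun d hd => colGEUp_colInsert x (hhead d hd), hcs⟩
    | some o =>
      refine isTableauUp_cons_iff.mpr ⟨hc', ?_, ih o hcs⟩
      rintro d hd
      rw [Option.elim, head?_tabInsert, Option.mem_some_iff] at hd
      refine hd ▸ colGEUp_colInsert_colInsert ?_ ho
      cases cs with
      | nil => exact colGEUp_nil_right c
      | cons d ds => exact hhead d rfl

lemma placticEq_tabInsert (x : Fin n) {cs : List (Word n)} (h : ∀ c ∈ cs, c.Pairwise (· < ·)) :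
    PlacticEq n (x :: columnReading cs) (columnReading (tabInsert x cs)) := by
  induction cs generalizing x with
  | nil => exact .refl _
  | cons c cs ih =>
    have hcol := (placticEq_colInsert x (h c List.mem_cons_self)).append
      (.refl (columnReading cs))
    rw [tabInsert]
    cases ho : (colInsert x c).2 with
    | none => simpa [columnReading, ho] using hcol
    | some o =>
      calc x :: columnReading (c :: cs) = (x :: c.reverse) ++ columnReading cs := by
            simp [columnReading]
        PlacticEq n _ ((colInsert x c).1.reverse ++ (o :: columnReading cs)) := by
          simpa [ho] using hcol
        PlacticEq n _ ((colInsert x c).1.reverse ++ columnReading (tabInsert o cs)) :=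
          (PlacticEq.refl _).append (ih o fun d hd => h d (List.mem_cons_of_mem c hd))
        _ = columnReading ((colInsert x c).1 :: (some o).elim cs (tabInsert · cs)) := by
          simp [columnReading]

def toTableau (w : Word n) : List (Word n) := w.foldr tabInsert []

lemma isTableauUp_toTableau (w : Word n) : IsTableauUp (toTableau w) := by
  induction w with
  | nil => simp [toTableau, IsTableauUp]
  | cons a w ih => exact isTableauUp_tabInsert a ih

lemma placticEq_columnReading_toTableau (w : Word n) :
    PlacticEq n (columnReading (toTableau w)) w := by
  induction w with
  | nil => exact .refl _
  | cons a w ih =>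
    exact (placticEq_tabInsert a fun c hc => ((isTableauUp_toTableau w).1 c hc).2).symm.trans
      ((PlacticEq.refl [a]).append ih)

end Insertion

/-- `L` is a regular language over `A`, and every element of
the Plactic monoid `M_n` has at least one representative in `L`. -/
theorem statement14 (n : ℕ) :
    (LangL n).IsRegular ∧ (∀ w : Word n, ∃ v ∈ LangL n, PlacticEq n v w) :=
  ⟨isRegular_LangL n, fun w => ⟨columnReading (toTableau w),
    columnReading_mem_LangL (isTableauUp_toTableau w), placticEq_columnReading_toTableau w⟩⟩
end
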